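/- arXiv:1401.5541 — 10 statements merged into one kernel-verified Lean document; each statement's English description precedes it below -/
import Mathlib

section
/- Let u₀: ℝ → ℝ be continuously differentiable with u₀' integrable on ℝ and with lim_{a→+∞} u₀(a) = lim_{a→−∞} u₀(a) = u_∞. Let t > 0 satisfy 1 + t·u₀'(a) > 0 for all a ∈ ℝ, and suppose ξ_t(a) = a + t·u₀(a) is a bijection of ℝ onto ℝ. Let ψ: ℝ → ℝ be continuous with ψ∘u₀ integrable on ℝ. Then x ↦ ψ(u₀(ξ_t⁻¹(x))) is integrable on ℝ and ∫_ℝ ψ(u₀(ξ_t⁻¹(x))) dx = ∫_ℝ ψ(u₀(a)) da. In other words, for smooth (shock-free) solutions u(x,t) = u₀(ξ_t⁻¹(x)) of inviscid Burgers, the integral ∫_ℝ ψ(u(x,t)) dx is conserved. -/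
open MeasureTheory

/-!
Substituting `x = ξ_t(a)`, whose Jacobian is `1 + t u₀'(a) > 0`, turns `∫ ψ(u(x,t)) dx` into
`∫ ψ(u₀) + t ∫ ψ(u₀) u₀'`. The second integral is `∫ (Ψ ∘ u₀)'` for a primitive `Ψ` of `ψ`, so it
vanishes because `u₀` has the same limit at `±∞`; it is integrable because `ψ ∘ u₀` is bounded.
-/

open Filter Topology Function

section ChangeOfVariables

variable {F : Type*} [NormedAddCommGroup F] [NormedSpace ℝ F] {f f' : ℝ → ℝ}

theorem integrable_comp_invFun_iff_integrable_abs_deriv_smul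
    (hf' : ∀ x, HasDerivAt f (f' x) x) (hf : Bijective f) (g : ℝ → F) :
    Integrable (fun x => g (invFun f x)) ↔ Integrable (fun x => |f' x| • g x) := by
  have h := integrableOn_image_iff_integrableOn_abs_deriv_smul MeasurableSet.univ
    (fun x _ => (hf' x).hasDerivWithinAt) hf.1.injOn (fun x => g (invFun f x))
  simpa only [Set.image_univ, hf.2.range_eq, integrableOn_univ, leftInverse_invFun hf.1 _] using h

theorem integral_comp_invFun_eq_integral_abs_deriv_smul
    (hf' : ∀ x, HasDerivAt f (f' x) x) (hf : Bijective f) (g : ℝ → F) :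
    ∫ x, g (invFun f x) = ∫ x, |f' x| • g x := by
  have h := integral_image_eq_integral_abs_deriv_smul MeasurableSet.univ
    (fun x _ => (hf' x).hasDerivWithinAt) hf.1.injOn (fun x => g (invFun f x))
  simpa only [Set.image_univ, hf.2.range_eq, setIntegral_univ, leftInverse_invFun hf.1 _] using h

end ChangeOfVariables

section ChainRule

variable {ψ u : ℝ → ℝ} {c : ℝ}

theorem integrable_comp_mul_deriv_of_tendsto (hψ : Continuous ψ) (hu : Differentiable ℝ u)
    (hu' : Integrable (deriv u)) (htop : Tendsto u atTop (𝓝 c)) (hbot : Tendsto u atBot (𝓝 c)) :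
    Integrable (fun a => ψ (u a) * deriv u a) := by
  have hψu : Continuous (ψ ∘ u) := hψ.comp hu.continuous
  have hbdd : Bornology.IsBounded (Set.range (ψ ∘ u)) :=
    hψu.isBounded_range_iff_isBigO_atTop_atBot.2
      ⟨((hψ.tendsto c).comp htop).isBigO_one ℝ, ((hψ.tendsto c).comp hbot).isBigO_one ℝ⟩
  obtain ⟨C, hC⟩ := isBounded_iff_forall_norm_le.1 hbdd
  exact hu'.bdd_mul hψu.aestronglyMeasurable
    (Eventually.of_forall fun a => hC _ (Set.mem_range_self a))

theorem integral_comp_mul_deriv_eq_zero_of_tendsto (hψ : Continuous ψ) (hu : Differentiable ℝ u)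
    (hψu' : Integrable (fun a => ψ (u a) * deriv u a))
    (htop : Tendsto u atTop (𝓝 c)) (hbot : Tendsto u atBot (𝓝 c)) :
    ∫ a, ψ (u a) * deriv u a = 0 := by
  set Ψ : ℝ → ℝ := fun x => ∫ y in (0 : ℝ)..x, ψ y
  have hΨ : ∀ x, HasDerivAt Ψ (ψ x) x := fun x => (hψ.integral_hasStrictDerivAt 0 x).hasDerivAt
  have hΨc : Continuous Ψ := continuous_iff_continuousAt.2 fun x => (hΨ x).continuousAt
  rw [integral_of_hasDerivAt_of_tendsto (f := Ψ ∘ u)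
    (fun a => (hΨ (u a)).comp a (hu a).hasDerivAt) hψu'
    ((hΨc.tendsto c).comp hbot) ((hΨc.tendsto c).comp htop), sub_self]

end ChainRule

theorem smooth_burgers_conservation_general (u₀ : ℝ → ℝ) (uinf t : ℝ) (ψ : ℝ → ℝ)
    (hC1 : ContDiff ℝ 1 u₀)
    (hint : Integrable (deriv u₀))
    (htop : Filter.Tendsto u₀ Filter.atTop (nhds uinf))
    (hbot : Filter.Tendsto u₀ Filter.atBot (nhds uinf))
    (hpos : ∀ a : ℝ, 0 < 1 + t * deriv u₀ a)
    (hbij : Function.Bijective (fun a => a + t * u₀ a))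
    (hψ : Continuous ψ)
    (hψint : Integrable (fun a => ψ (u₀ a))) :
    Integrable (fun x => ψ (u₀ (Function.invFun (fun a => a + t * u₀ a) x))) ∧
    ∫ x : ℝ, ψ (u₀ (Function.invFun (fun a => a + t * u₀ a) x)) = ∫ a : ℝ, ψ (u₀ a) := by
  have hu₀ : Differentiable ℝ u₀ := hC1.differentiable one_ne_zero
  have hξ : ∀ a, HasDerivAt (fun a => a + t * u₀ a) (1 + t * deriv u₀ a) a := fun a =>
    (hasDerivAt_id a).add ((hu₀ a).hasDerivAt.const_mul t)
  have hmul := integrable_comp_mul_deriv_of_tendsto hψ hu₀ hint htop hbot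
  have hweight : (fun a => |1 + t * deriv u₀ a| • ψ (u₀ a)) =
      fun a => ψ (u₀ a) + t * (ψ (u₀ a) * deriv u₀ a) := by
    funext a
    rw [abs_of_pos (hpos a), smul_eq_mul]
    ring
  refine ⟨(integrable_comp_invFun_iff_integrable_abs_deriv_smul hξ hbij (fun a => ψ (u₀ a))).2 ?_, ?_⟩
  · rw [hweight]
    exact hψint.add (hmul.const_mul t)
  · rw [integral_comp_invFun_eq_integral_abs_deriv_smul hξ hbij (fun a => ψ (u₀ a)), hweight,
      integral_add hψint (hmul.const_mul t), integral_const_mul,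
      integral_comp_mul_deriv_eq_zero_of_tendsto hψ hu₀ hmul htop hbot, mul_zero, add_zero]

/-- Conservation of `∫ ψ(u(x,t)) dx` for smooth (shock-free) inviscid Burgers solutions
`u(x,t) = u₀(ξ_t⁻¹(x))`: if `ξ_t(a) = a + t·u₀(a)` is bijective and `1 + t·u₀'(a) > 0`,
then for any continuous `ψ` with `ψ∘u₀` integrable, `x ↦ ψ(u₀(ξ_t⁻¹(x)))` is integrable
and its integral equals `∫ ψ(u₀(a)) da`. -/
theorem smooth_burgers_conservation (u₀ : ℝ → ℝ) (uinf t : ℝ) (ψ : ℝ → ℝ)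
    (hC1 : ContDiff ℝ 1 u₀)
    (hint : Integrable (deriv u₀))
    (htop : Filter.Tendsto u₀ Filter.atTop (nhds uinf))
    (hbot : Filter.Tendsto u₀ Filter.atBot (nhds uinf))
    (ht : 0 < t)
    (hpos : ∀ a : ℝ, 0 < 1 + t * deriv u₀ a)
    (hbij : Function.Bijective (fun a => a + t * u₀ a))
    (hψ : Continuous ψ)
    (hψint : Integrable (fun a => ψ (u₀ a))) :
    Integrable (fun x => ψ (u₀ (Function.invFun (fun a => a + t * u₀ a) x))) ∧
    ∫ x : ℝ, ψ (u₀ (Function.invFun (fun a => a + t * u₀ a) x)) = ∫ a : ℝ, ψ (u₀ a) :=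
  smooth_burgers_conservation_general u₀ uinf t ψ hC1 hint htop hbot hpos hbij hψ hψint
end

section
/- Let u₀: ℝ → ℝ be bounded and continuously differentiable with u₀' integrable on ℝ and lim_{a→±∞} u₀(a) = u_∞. Let t > 0 and let a₋ < a₊ be such that x_* := a₋ + t·u₀(a₋) = a₊ + t·u₀(a₊), and suppose 1 + t·u₀'(a) > 0 for all a ∉ (a₋, a₊). Then ξ_t(a) = a + t·u₀(a) maps (−∞, a₋] strictly increasingly onto (−∞, x_*] and [a₊, ∞) strictly increasingly onto [x_*, ∞); define for x ≠ x_* the single-shock Burgers profile u(x,t) := u₀(a), where a ∈ ℝ∖(a₋,a₊) is the unique label with ξ_t(a) = x. Then for every continuous ψ: ℝ → ℝ with ψ∘u₀ integrable on ℝ, the function x ↦ ψ(u(x,t)) is integrable on ℝ and the Lagrangian anomaly formula holds: ∫_ℝ ψ(u(x,t)) dx − ∫_ℝ ψ(u₀(a)) da = −[ ∫_{a₋}^{a₊} ψ(u₀(a)) da − t·∫_{u₊}^{u₋} ψ(v) dv ], where u₋ := u₀(a₋) and u₊ := u₀(a₊). -/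
/-!
Off the shock interval the Lagrangian map `ξ_t` has derivative `1 + t u₀' > 0`, so its two
branches are increasing bijections onto the half-lines on either side of `x_*`, and the change of
variables `x = ξ_t(a)` turns `∫ ψ(u) dx` into `∫_{a ∉ (a₋, a₊)} ψ(u₀) (1 + t u₀') da`. The extra
term `t ψ(u₀) u₀'` is the derivative of `t Ψ(u₀)` with `Ψ' = ψ`; since `u₀ → u_∞` at both ends,
its integrals over the two half-lines add up to `t ∫_{u₊}^{u₋} ψ`, while `∫ ψ(u₀)` loses
exactly the labels in `(a₋, a₊)`.
-/

open MeasureTheory Set Filter Topology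

def lagrangianMap (u₀ : ℝ → ℝ) (t a : ℝ) : ℝ := a + t * u₀ a

section LagrangianMap

variable {u₀ : ℝ → ℝ} {t : ℝ}

theorem hasDerivAt_lagrangianMap {a : ℝ} (hu₀ : DifferentiableAt ℝ u₀ a) :
    HasDerivAt (lagrangianMap u₀ t) (1 + t * deriv u₀ a) a :=
  (hasDerivAt_id a).add (hu₀.hasDerivAt.const_mul t)

theorem continuous_lagrangianMap (hu₀ : Continuous u₀) : Continuous (lagrangianMap u₀ t) :=
  continuous_id.add (continuous_const.mul hu₀)

theorem tendsto_lagrangianMap_atTop {c : ℝ} (hu₀ : Tendsto u₀ atTop (𝓝 c)) :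
    Tendsto (lagrangianMap u₀ t) atTop atTop :=
  tendsto_id.atTop_add (hu₀.const_mul t)

theorem tendsto_lagrangianMap_atBot {c : ℝ} (hu₀ : Tendsto u₀ atBot (𝓝 c)) :
    Tendsto (lagrangianMap u₀ t) atBot atBot :=
  tendsto_id.atBot_add (hu₀.const_mul t)

theorem strictMonoOn_lagrangianMap {s : Set ℝ} (hs : Convex ℝ s) (hu₀ : Differentiable ℝ u₀)
    (hpos : ∀ a ∈ interior s, 0 < 1 + t * deriv u₀ a) : StrictMonoOn (lagrangianMap u₀ t) s :=
  strictMonoOn_of_deriv_pos hs (continuous_lagrangianMap hu₀.continuous).continuousOn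
    fun a ha => (hasDerivAt_lagrangianMap (hu₀ a)).deriv ▸ hpos a ha

theorem integrableOn_image_lagrangianMap_and_setIntegral_eq {s : Set ℝ} {u ψ : ℝ → ℝ}
    (hs : MeasurableSet s) (hu₀ : Differentiable ℝ u₀) (hmono : MonotoneOn (lagrangianMap u₀ t) s)
    (hu : ∀ᵐ a ∂volume.restrict s, u (lagrangianMap u₀ t a) = u₀ a)
    (hψu₀ : IntegrableOn (fun a => ψ (u₀ a)) s)
    (hflux : IntegrableOn (fun a => ψ (u₀ a) * deriv u₀ a) s) :
    IntegrableOn (fun x => ψ (u x)) (lagrangianMap u₀ t '' s) ∧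
      ∫ x in lagrangianMap u₀ t '' s, ψ (u x)
        = (∫ a in s, ψ (u₀ a)) + t * ∫ a in s, ψ (u₀ a) * deriv u₀ a := by
  have hderiv : ∀ a ∈ s, HasDerivWithinAt (lagrangianMap u₀ t) (1 + t * deriv u₀ a) s a :=
    fun a _ => (hasDerivAt_lagrangianMap (hu₀ a)).hasDerivWithinAt
  have hweight : (fun a => (1 + t * deriv u₀ a) • ψ (u (lagrangianMap u₀ t a)))
      =ᵐ[volume.restrict s] fun a => ψ (u₀ a) + t * (ψ (u₀ a) * deriv u₀ a) := by
    filter_upwards [hu] with a ha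
    rw [ha, smul_eq_mul]
    ring
  refine ⟨(integrableOn_image_iff_integrableOn_deriv_smul_of_monotoneOn hs hderiv hmono _).2
    ((hψu₀.add (hflux.const_mul t)).congr_fun_ae hweight.symm), ?_⟩
  rw [integral_image_eq_integral_deriv_smul_of_monotoneOn hs hderiv hmono,
    integral_congr_ae hweight, integral_add hψu₀ (hflux.const_mul t), integral_const_mul]

end LagrangianMap

theorem MeasureTheory.Integrable.continuous_comp_mul {α : Type*} [MeasurableSpace α]
    {μ : Measure α} {ψ : ℝ → ℝ} {u v : α → ℝ} (hψ : Continuous ψ)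
    (hu : AEStronglyMeasurable u μ) (hbdd : ∃ M, ∀ a, |u a| ≤ M) (hv : Integrable v μ) :
    Integrable (fun a => ψ (u a) * v a) μ := by
  obtain ⟨M, hM⟩ := hbdd
  obtain ⟨C, hC⟩ :=
    (isCompact_Icc (a := -M) (b := M)).exists_bound_of_continuousOn hψ.continuousOn
  exact hv.bdd_mul (hψ.comp_aestronglyMeasurable hu)
    (.of_forall fun a => hC (u a) (abs_le.mp (hM a)))

section ChainRule

variable {ψ u : ℝ → ℝ} {b c : ℝ}

theorem setIntegral_Iic_comp_mul_deriv (hψ : Continuous ψ) (hu : Differentiable ℝ u)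
    (hlim : Tendsto u atBot (𝓝 c)) (hint : IntegrableOn (fun a => ψ (u a) * deriv u a) (Iic b)) :
    ∫ a in Iic b, ψ (u a) * deriv u a = ∫ v in c..u b, ψ v := by
  have hΨ := fun w => (hψ.integral_hasStrictDerivAt c w).hasDerivAt
  have hlimΨ := (hΨ c).continuousAt.tendsto.comp hlim
  rw [intervalIntegral.integral_same] at hlimΨ
  rw [integral_Iic_of_hasDerivAt_of_tendsto' (fun a _ => (hΨ (u a)).comp a (hu a).hasDerivAt)
    hint hlimΨ, sub_zero, Function.comp_apply]

theorem setIntegral_Ioi_comp_mul_deriv (hψ : Continuous ψ) (hu : Differentiable ℝ u)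
    (hlim : Tendsto u atTop (𝓝 c)) (hint : IntegrableOn (fun a => ψ (u a) * deriv u a) (Ioi b)) :
    ∫ a in Ioi b, ψ (u a) * deriv u a = ∫ v in u b..c, ψ v := by
  have hΨ := fun w => (hψ.integral_hasStrictDerivAt c w).hasDerivAt
  have hlimΨ := (hΨ c).continuousAt.tendsto.comp hlim
  rw [intervalIntegral.integral_same] at hlimΨ
  rw [integral_Ioi_of_hasDerivAt_of_tendsto' (fun a _ => (hΨ (u a)).comp a (hu a).hasDerivAt)
    hint hlimΨ, zero_sub, Function.comp_apply, ← intervalIntegral.integral_symm]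

theorem setIntegral_Iic_add_setIntegral_Ioi_comp_mul_deriv (hψ : Continuous ψ)
    (hu : Differentiable ℝ u) (hbot : Tendsto u atBot (𝓝 c)) (htop : Tendsto u atTop (𝓝 c))
    (hint : Integrable fun a => ψ (u a) * deriv u a) (b₁ b₂ : ℝ) :
    (∫ a in Iic b₁, ψ (u a) * deriv u a) + ∫ a in Ioi b₂, ψ (u a) * deriv u a
      = ∫ v in u b₂..u b₁, ψ v := by
  rw [setIntegral_Iic_comp_mul_deriv hψ hu hbot hint.integrableOn,
    setIntegral_Ioi_comp_mul_deriv hψ hu htop hint.integrableOn, add_comm,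
    intervalIntegral.integral_add_adjacent_intervals (hψ.intervalIntegrable _ _)
      (hψ.intervalIntegrable _ _)]

end ChainRule

theorem integral_eq_setIntegral_Iic_add_intervalIntegral_add_setIntegral_Ioi {E : Type*}
    [NormedAddCommGroup E] [NormedSpace ℝ E] {μ : Measure ℝ} {f : ℝ → E} (hf : Integrable f μ)
    (a b : ℝ) :
    ∫ x, f x ∂μ = (∫ x in Iic a, f x ∂μ) + (∫ x in a..b, f x ∂μ) + ∫ x in Ioi b, f x ∂μ := by
  rw [← intervalIntegral.integral_Ioi_sub_Ioi' hf.integrableOn hf.integrableOn, add_assoc,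
    sub_add_cancel, intervalIntegral.integral_Iic_add_Ioi hf.integrableOn hf.integrableOn]

theorem single_shock_lagrangian_anomaly_general (u₀ : ℝ → ℝ) (uinf t am ap xs : ℝ) (ψ : ℝ → ℝ)
    (hC1 : ContDiff ℝ 1 u₀)
    (hbdd : ∃ M, ∀ a, |u₀ a| ≤ M)
    (hint : Integrable (deriv u₀))
    (htop : Filter.Tendsto u₀ Filter.atTop (nhds uinf))
    (hbot : Filter.Tendsto u₀ Filter.atBot (nhds uinf))
    (hendm : xs = am + t * u₀ am) (hendp : xs = ap + t * u₀ ap)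
    (hpos : ∀ a : ℝ, a ∉ Set.Ioo am ap → 0 < 1 + t * deriv u₀ a)
    (hψ : Continuous ψ)
    (hψint : Integrable (fun a => ψ (u₀ a))) :
    StrictMonoOn (fun a => a + t * u₀ a) (Set.Iic am) ∧
    (fun a => a + t * u₀ a) '' Set.Iic am = Set.Iic xs ∧
    StrictMonoOn (fun a => a + t * u₀ a) (Set.Ici ap) ∧
    (fun a => a + t * u₀ a) '' Set.Ici ap = Set.Ici xs ∧
    (∀ u : ℝ → ℝ,
      (∀ a : ℝ, (a < am ∨ ap < a) → u (a + t * u₀ a) = u₀ a) →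
      Integrable (fun x => ψ (u x)) ∧
      (∫ x : ℝ, ψ (u x)) - (∫ a : ℝ, ψ (u₀ a))
        = -((∫ a in am..ap, ψ (u₀ a)) - t * ∫ v in (u₀ ap)..(u₀ am), ψ v)) := by
  have hu₀ : Differentiable ℝ u₀ := hC1.differentiable one_ne_zero
  have hξ : Continuous (lagrangianMap u₀ t) := continuous_lagrangianMap hC1.continuous
  have hmono_m : StrictMonoOn (lagrangianMap u₀ t) (Iic am) :=
    strictMonoOn_lagrangianMap (convex_Iic am) hu₀ fun a ha =>
      hpos a fun h => (interior_Iic.subset ha).not_gt h.1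
  have hmono_p : StrictMonoOn (lagrangianMap u₀ t) (Ici ap) :=
    strictMonoOn_lagrangianMap (convex_Ici ap) hu₀ fun a ha =>
      hpos a fun h => (interior_Ici.subset ha).not_gt h.2
  have himg_m : lagrangianMap u₀ t '' Iic am = Iic xs := hendm ▸
    hξ.continuousOn.image_Iic_of_monotoneOn hmono_m.monotoneOn (tendsto_lagrangianMap_atBot hbot)
  have himg_p : lagrangianMap u₀ t '' Ioi ap = Ioi xs := hendp ▸
    hξ.continuousOn.image_Ioi_of_strictMonoOn hmono_p (tendsto_lagrangianMap_atTop htop)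
  refine ⟨hmono_m, himg_m, hmono_p, hendp ▸ hξ.continuousOn.image_Ici_of_monotoneOn
    hmono_p.monotoneOn (tendsto_lagrangianMap_atTop htop), fun u hu => ?_⟩
  have hflux : Integrable fun a => ψ (u₀ a) * deriv u₀ a :=
    hint.continuous_comp_mul hψ hC1.continuous.aestronglyMeasurable hbdd
  have hu_m : ∀ᵐ a ∂volume.restrict (Iic am), u (lagrangianMap u₀ t a) = u₀ a := by
    rw [← Measure.restrict_congr_set Iio_ae_eq_Iic]
    exact ae_restrict_of_forall_mem measurableSet_Iio fun a ha => hu a (Or.inl ha)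
  obtain ⟨hint_m, heq_m⟩ := integrableOn_image_lagrangianMap_and_setIntegral_eq measurableSet_Iic
    hu₀ hmono_m.monotoneOn hu_m hψint.integrableOn hflux.integrableOn
  obtain ⟨hint_p, heq_p⟩ := integrableOn_image_lagrangianMap_and_setIntegral_eq measurableSet_Ioi
    hu₀ (hmono_p.mono Ioi_subset_Ici_self).monotoneOn
    (ae_restrict_of_forall_mem measurableSet_Ioi fun a ha => hu a (Or.inr ha))
    hψint.integrableOn hflux.integrableOn
  rw [himg_m] at hint_m heq_m
  rw [himg_p] at hint_p heq_p
  refine ⟨integrableOn_univ.mp (Iic_union_Ioi (a := xs) ▸ hint_m.union hint_p), ?_⟩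
  rw [← intervalIntegral.integral_Iic_add_Ioi hint_m hint_p, heq_m, heq_p,
    integral_eq_setIntegral_Iic_add_intervalIntegral_add_setIntegral_Ioi hψint am ap,
    ← setIntegral_Iic_add_setIntegral_Ioi_comp_mul_deriv hψ hu₀ hbot htop hflux]
  ring

/-- Lagrangian anomaly formula for a single-shock Burgers profile: with shock interval
`[am, ap]` and shock location `xs = am + t·u₀(am) = ap + t·u₀(ap)`, the map
`ξ_t(a) = a + t·u₀(a)` maps `(−∞, am]` strictly increasingly onto `(−∞, xs]` and
`[ap, ∞)` strictly increasingly onto `[xs, ∞)`; and for any profile `u` with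
`u(ξ_t(a)) = u₀(a)` for labels `a` outside `[am, ap]`, and any continuous `ψ` with
`ψ∘u₀` integrable, `ψ∘u` is integrable and
`∫ ψ(u(x,t)) dx − ∫ ψ(u₀(a)) da = −[∫_{am}^{ap} ψ(u₀(a)) da − t·∫_{u₊}^{u₋} ψ(v) dv]`. -/
theorem single_shock_lagrangian_anomaly (u₀ : ℝ → ℝ) (uinf t am ap xs : ℝ) (ψ : ℝ → ℝ)
    (hC1 : ContDiff ℝ 1 u₀)
    (hbdd : ∃ M, ∀ a, |u₀ a| ≤ M)
    (hint : Integrable (deriv u₀))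
    (htop : Filter.Tendsto u₀ Filter.atTop (nhds uinf))
    (hbot : Filter.Tendsto u₀ Filter.atBot (nhds uinf))
    (ht : 0 < t) (hlt : am < ap)
    (hendm : xs = am + t * u₀ am) (hendp : xs = ap + t * u₀ ap)
    (hpos : ∀ a : ℝ, a ∉ Set.Ioo am ap → 0 < 1 + t * deriv u₀ a)
    (hψ : Continuous ψ)
    (hψint : Integrable (fun a => ψ (u₀ a))) :
    StrictMonoOn (fun a => a + t * u₀ a) (Set.Iic am) ∧
    (fun a => a + t * u₀ a) '' Set.Iic am = Set.Iic xs ∧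
    StrictMonoOn (fun a => a + t * u₀ a) (Set.Ici ap) ∧
    (fun a => a + t * u₀ a) '' Set.Ici ap = Set.Ici xs ∧
    (∀ u : ℝ → ℝ,
      (∀ a : ℝ, (a < am ∨ ap < a) → u (a + t * u₀ a) = u₀ a) →
      Integrable (fun x => ψ (u x)) ∧
      (∫ x : ℝ, ψ (u x)) - (∫ a : ℝ, ψ (u₀ a))
        = -((∫ a in am..ap, ψ (u₀ a)) - t * ∫ v in (u₀ ap)..(u₀ am), ψ v)) :=
  single_shock_lagrangian_anomaly_general u₀ uinf t am ap xs ψ hC1 hbdd hint htop hbot hendm hendp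
    hpos hψ hψint
end

section
/- Let 0 < t_* ≤ t_f, let u₀: ℝ → ℝ be continuous, and let x_*, a₋, a₊: [t_*, t_f] → ℝ be continuously differentiable with a₋(s) < a₊(s) for all s, a₋ nonincreasing and a₊ nondecreasing. Assume the endpoint relations x_*(s) = a₋(s) + s·u₀(a₋(s)) = a₊(s) + s·u₀(a₊(s)) and the average condition x_*'(s) = (1/(a₊(s) − a₋(s)))·∫_{a₋(s)}^{a₊(s)} (x_*(s) − a)/s · da for all s ∈ [t_*, t_f]. Let ψ: ℝ → ℝ be convex and differentiable, and define Δ_ψ(s) = ∫_{a₋(s)}^{a₊(s)} ψ((x_*(s) − a)/s) da + ∫_{a₋(t_f)}^{a₋(s)} ψ(u₀(a)) da + ∫_{a₊(s)}^{a₊(t_f)} ψ(u₀(a)) da. Then Δ_ψ is nonincreasing on [t_*, t_f]; moreover Δ_ψ(t_f) = t_f·∫_{u₊(t_f)}^{u₋(t_f)} ψ(v) dv, where u₋(s) := u₀(a₋(s)) and u₊(s) := u₀(a₊(s)), so that t_f·∫_{u₊(t_f)}^{u₋(t_f)} ψ(v) dv ≤ Δ_ψ(t_*). In particular, a weak solution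 of inviscid Burgers whose shock satisfies the average condition dissipates every convex entropy. -/
/-!
Substituting `v = (x_*(s) - a) / s` turns the shock term of `Δ_ψ` into `s ∫_{u₊(s)}^{u₋(s)} ψ`,
so `Δ_ψ` is a combination of primitives and can be differentiated by the chain rule. The endpoint
relations make the terms carrying `a₋'` and `a₊'` cancel, and the average condition is the
Rankine–Hugoniot relation `x_*' = (u₋ + u₊) / 2`; what is left is
`Δ_ψ'(s) = ∫_{u₊}^{u₋} ψ - (u₋ - u₊) (ψ u₊ + ψ u₋) / 2`, which is `≤ 0` by the trapezoid
(Hermite–Hadamard) inequality for convex `ψ`, as `u₊ ≤ u₋`. At `s = t_f` both outer integrals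
are empty.
-/

open intervalIntegral Set Filter
open MeasureTheory (volume)

theorem sub_div_eq_of_eq_add_mul {x a s v : ℝ} (hs : s ≠ 0) (h : x = a + s * v) :
    (x - a) / s = v := by
  rw [h, add_sub_cancel_left, mul_div_cancel_left₀ _ hs]

theorem ConvexOn.le_chord {ψ : ℝ → ℝ} {p m v : ℝ} (hψ : ConvexOn ℝ (Icc p m) ψ) (hpm : p < m)
    (hv : v ∈ Icc p m) : ψ v ≤ ((m - v) * ψ p + (v - p) * ψ m) / (m - p) := by
  have hd : 0 < m - p := sub_pos.2 hpm
  have hcomb : ((m - v) / (m - p)) • p + ((v - p) / (m - p)) • m = v := by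
    simp only [smul_eq_mul]; field_simp; ring
  have h := hψ.2 (left_mem_Icc.2 hpm.le) (right_mem_Icc.2 hpm.le)
    (div_nonneg (sub_nonneg.2 hv.2) hd.le) (div_nonneg (sub_nonneg.2 hv.1) hd.le)
    (by field_simp; ring)
  rw [hcomb, smul_eq_mul, smul_eq_mul] at h
  exact h.trans_eq (by field_simp)

theorem integral_chord {p m : ℝ} (hpm : p ≠ m) (A B : ℝ) :
    ∫ v in p..m, ((m - v) * A + (v - p) * B) / (m - p) = (m - p) * (A + B) / 2 := by
  have : m - p ≠ 0 := sub_ne_zero.2 hpm.symm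
  rw [integral_div, integral_add (Continuous.intervalIntegrable (by fun_prop) _ _)
    (Continuous.intervalIntegrable (by fun_prop) _ _)]
  simp only [integral_mul_const, integral_comp_sub_left (fun x => x),
    integral_comp_sub_right (fun x => x), integral_id, sub_self]
  field_simp
  ring

theorem ConvexOn.intervalIntegral_le_trapezoid {ψ : ℝ → ℝ} {p m : ℝ} (hpm : p ≤ m)
    (hψ : ConvexOn ℝ (Icc p m) ψ) (hint : IntervalIntegrable ψ volume p m) :
    ∫ v in p..m, ψ v ≤ (m - p) * (ψ p + ψ m) / 2 := by
  rcases hpm.eq_or_lt with rfl | hlt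
  · simp
  calc ∫ v in p..m, ψ v ≤ ∫ v in p..m, ((m - v) * ψ p + (v - p) * ψ m) / (m - p) :=
        integral_mono_on hpm hint (Continuous.intervalIntegrable (by fun_prop) _ _)
          fun v hv => hψ.le_chord hlt hv
    _ = (m - p) * (ψ p + ψ m) / 2 := integral_chord hlt.ne _ _

theorem one_div_sub_mul_integral_sub_div {a b : ℝ} (hab : a ≠ b) (c t : ℝ) :
    1 / (b - a) * ∫ x in a..b, (c - x) / t = ((c - a) / t + (c - b) / t) / 2 := by
  have : b - a ≠ 0 := sub_ne_zero.2 hab.symm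
  simp only [integral_div, integral_comp_sub_left (fun x => x), integral_id]
  field_simp
  ring

theorem intervalIntegral.integral_comp_sub_left_div {E : Type*} [NormedAddCommGroup E]
    [NormedSpace ℝ E] (f : ℝ → E) {t : ℝ} (ht : t ≠ 0) (c a b : ℝ) :
    ∫ x in a..b, f ((c - x) / t) = t • ∫ v in (c - b) / t..(c - a) / t, f v := by
  simp only [sub_div, integral_comp_sub_div f ht]

section VariableBounds

variable {E : Type*} [NormedAddCommGroup E] [NormedSpace ℝ E] [CompleteSpace E] {f : ℝ → E}
  {a b : ℝ → ℝ}

theorem Continuous.hasDerivAt_intervalIntegral_comp {a' b' s : ℝ}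
    (hf : Continuous f) (ha : HasDerivAt a a' s) (hb : HasDerivAt b b' s) :
    HasDerivAt (fun r => ∫ v in a r..b r, f v) (b' • f (b s) - a' • f (a s)) s := by
  have hF (u : ℝ) : HasDerivAt (fun x => ∫ v in 0..x, f v) (f u) u :=
    (hf.integral_hasStrictDerivAt 0 u).hasDerivAt
  refine (((hF (b s)).scomp s hb).sub ((hF (a s)).scomp s ha)).congr_of_eventuallyEq ?_
  exact Eventually.of_forall fun r => (integral_interval_sub_left (hf.intervalIntegrable _ _)
    (hf.intervalIntegrable _ _)).symm

theorem Continuous.continuousOn_intervalIntegral_comp {S : Set ℝ}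
    (hf : Continuous f) (ha : ContinuousOn a S) (hb : ContinuousOn b S) :
    ContinuousOn (fun r => ∫ v in a r..b r, f v) S := by
  have hF : Continuous (fun x => ∫ v in 0..x, f v) := continuous_iff_continuousAt.2 fun u =>
    (hf.integral_hasStrictDerivAt 0 u).hasDerivAt.continuousAt
  refine ((hF.comp_continuousOn hb).sub (hF.comp_continuousOn ha)).congr fun r _ => ?_
  exact (integral_interval_sub_left (hf.intervalIntegrable _ _) (hf.intervalIntegrable _ _)).symm

end VariableBounds

section Shock

variable {ψ u₀ xs am ap : ℝ → ℝ} {tf : ℝ}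

noncomputable def shockEntropy (ψ u₀ xs am ap : ℝ → ℝ) (tf s : ℝ) : ℝ :=
  (∫ a in am s..ap s, ψ ((xs s - a) / s)) + (∫ a in am tf..am s, ψ (u₀ a))
    + ∫ a in ap s..ap tf, ψ (u₀ a)

theorem shockEntropy_eqOn :
    EqOn (shockEntropy ψ u₀ xs am ap tf)
      (fun s => s * (∫ v in (xs s - ap s) / s..(xs s - am s) / s, ψ v)
        + (∫ a in am tf..am s, ψ (u₀ a)) + ∫ a in ap s..ap tf, ψ (u₀ a)) {0}ᶜ := fun s hs => by
  simp only [shockEntropy, integral_comp_sub_left_div ψ hs, smul_eq_mul]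

theorem continuousOn_shockEntropy {S : Set ℝ} (hψ : Continuous ψ) (hu₀ : Continuous u₀)
    (hS : S ⊆ {0}ᶜ) (hxs : ContinuousOn xs S) (ham : ContinuousOn am S) (hap : ContinuousOn ap S) :
    ContinuousOn (shockEntropy ψ u₀ xs am ap tf) S := by
  refine ContinuousOn.congr ?_ (shockEntropy_eqOn.mono hS)
  have hdiv (a : ℝ → ℝ) (ha : ContinuousOn a S) : ContinuousOn (fun s => (xs s - a s) / s) S :=
    (hxs.sub ha).div continuousOn_id hS
  exact (continuousOn_id.mul
    (hψ.continuousOn_intervalIntegral_comp (hdiv ap hap) (hdiv am ham))).add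
    ((hψ.comp hu₀).continuousOn_intervalIntegral_comp continuousOn_const ham) |>.add
    ((hψ.comp hu₀).continuousOn_intervalIntegral_comp hap continuousOn_const)

theorem hasDerivAt_shockEntropy (hψ : Continuous ψ) (hu₀ : Continuous u₀) {s x' m' p' : ℝ}
    (hs : s ≠ 0) (hx : HasDerivAt xs x' s) (hm : HasDerivAt am m' s) (hp : HasDerivAt ap p' s)
    (hend_m : xs s = am s + s * u₀ (am s)) (hend_p : xs s = ap s + s * u₀ (ap s))
    (hRH : x' = (u₀ (am s) + u₀ (ap s)) / 2) :
    HasDerivAt (shockEntropy ψ u₀ xs am ap tf)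
      ((∫ v in u₀ (ap s)..u₀ (am s), ψ v)
        - (u₀ (am s) - u₀ (ap s)) * (ψ (u₀ (ap s)) + ψ (u₀ (am s))) / 2) s := by
  have hum := sub_div_eq_of_eq_add_mul hs hend_m
  have hup := sub_div_eq_of_eq_add_mul hs hend_p
  have hdiv {a : ℝ → ℝ} {a' : ℝ} (ha : HasDerivAt a a' s) :
      HasDerivAt (fun r => (xs r - a r) / r) ((x' - a' - (xs s - a s) / s) / s) s :=
    ((hx.sub ha).div (hasDerivAt_id' s) hs).congr_deriv (by rw [Pi.sub_apply]; field_simp)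
  have hG := ((hasDerivAt_id s).mul
    (hψ.hasDerivAt_intervalIntegral_comp (hdiv hp) (hdiv hm))).add
    ((hψ.comp hu₀).hasDerivAt_intervalIntegral_comp (hasDerivAt_const s (am tf)) hm) |>.add
    ((hψ.comp hu₀).hasDerivAt_intervalIntegral_comp hp (hasDerivAt_const s (ap tf)))
  refine (hG.congr_of_eventuallyEq (shockEntropy_eqOn.eventuallyEq_of_mem
    (isOpen_compl_singleton.mem_nhds hs))).congr_deriv ?_
  simp only [id, smul_eq_mul, Function.comp_apply, hum, hup, hRH]
  field_simp
  ring

theorem shockEntropy_self (htf : tf ≠ 0) (hend_m : xs tf = am tf + tf * u₀ (am tf))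
    (hend_p : xs tf = ap tf + tf * u₀ (ap tf)) :
    shockEntropy ψ u₀ xs am ap tf tf = tf * ∫ v in u₀ (ap tf)..u₀ (am tf), ψ v := by
  rw [shockEntropy, integral_same, integral_same, add_zero, add_zero,
    integral_comp_sub_left_div ψ htf, smul_eq_mul, sub_div_eq_of_eq_add_mul htf hend_m,
    sub_div_eq_of_eq_add_mul htf hend_p]

theorem antitoneOn_shockEntropy {t₀ t₁ : ℝ} (ht₀ : 0 < t₀) (hψ : ConvexOn ℝ univ ψ)
    (hu₀ : Continuous u₀) (hxs : DifferentiableOn ℝ xs (Icc t₀ t₁))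
    (ham : DifferentiableOn ℝ am (Icc t₀ t₁)) (hap : DifferentiableOn ℝ ap (Icc t₀ t₁))
    (hlt : ∀ s ∈ Icc t₀ t₁, am s < ap s)
    (hend_m : ∀ s ∈ Icc t₀ t₁, xs s = am s + s * u₀ (am s))
    (hend_p : ∀ s ∈ Icc t₀ t₁, xs s = ap s + s * u₀ (ap s))
    (havg : ∀ s ∈ Icc t₀ t₁,
      derivWithin xs (Icc t₀ t₁) s = 1 / (ap s - am s) * ∫ a in am s..ap s, (xs s - a) / s) :
    AntitoneOn (shockEntropy ψ u₀ xs am ap tf) (Icc t₀ t₁) := by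
  have hψc : Continuous ψ := continuousOn_univ.mp (hψ.continuousOn isOpen_univ)
  have hI0 : Icc t₀ t₁ ⊆ {0}ᶜ := fun s hs => (ht₀.trans_le hs.1).ne'
  refine antitoneOn_of_hasDerivWithinAt_nonpos (convex_Icc _ _)
    (continuousOn_shockEntropy hψc hu₀ hI0 hxs.continuousOn ham.continuousOn hap.continuousOn)
    (f' := fun s => (∫ v in u₀ (ap s)..u₀ (am s), ψ v)
      - (u₀ (am s) - u₀ (ap s)) * (ψ (u₀ (ap s)) + ψ (u₀ (am s))) / 2)
    (fun s hs => ?_) (fun s hs => ?_) <;> rw [interior_Icc] at hs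
  all_goals
    have hsI := Ioo_subset_Icc_self hs
    have hum := sub_div_eq_of_eq_add_mul (hI0 hsI) (hend_m s hsI)
    have hup := sub_div_eq_of_eq_add_mul (hI0 hsI) (hend_p s hsI)
  · have hD {f : ℝ → ℝ} (hf : DifferentiableOn ℝ f (Icc t₀ t₁)) :
        HasDerivAt f (derivWithin f (Icc t₀ t₁) s) s :=
      (hf s hsI).hasDerivWithinAt.hasDerivAt (Icc_mem_nhds hs.1 hs.2)
    have hRH : derivWithin xs (Icc t₀ t₁) s = (u₀ (am s) + u₀ (ap s)) / 2 := by
      rw [havg s hsI, one_div_sub_mul_integral_sub_div (hlt s hsI).ne, hum, hup]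
    exact (hasDerivAt_shockEntropy hψc hu₀ (hI0 hsI) (hD hxs) (hD ham) (hD hap) (hend_m s hsI)
      (hend_p s hsI) hRH).hasDerivWithinAt
  · have hu : u₀ (ap s) ≤ u₀ (am s) := by
      rw [← hum, ← hup]
      exact div_le_div_of_nonneg_right (by linarith [hlt s hsI]) (ht₀.trans_le hsI.1).le
    exact sub_nonpos.2 <| (hψ.subset (subset_univ _) (convex_Icc _ _)).intervalIntegral_le_trapezoid
      hu (hψc.intervalIntegrable _ _)

end Shock

theorem convex_entropy_dissipation_general
    (tstar tf : ℝ) (u₀ xs am ap : ℝ → ℝ) (ψ : ℝ → ℝ) (Δ : ℝ → ℝ)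
    (htstar : 0 < tstar) (htf : tstar ≤ tf)
    (hu₀ : Continuous u₀)
    (hxs : ContDiffOn ℝ 1 xs (Set.Icc tstar tf))
    (ham : ContDiffOn ℝ 1 am (Set.Icc tstar tf))
    (hap : ContDiffOn ℝ 1 ap (Set.Icc tstar tf))
    (hlt : ∀ s ∈ Set.Icc tstar tf, am s < ap s)
    (hend_m : ∀ s ∈ Set.Icc tstar tf, xs s = am s + s * u₀ (am s))
    (hend_p : ∀ s ∈ Set.Icc tstar tf, xs s = ap s + s * u₀ (ap s))
    (havg : ∀ s ∈ Set.Icc tstar tf,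
      derivWithin xs (Set.Icc tstar tf) s
        = (1 / (ap s - am s)) * ∫ a in (am s)..(ap s), (xs s - a) / s)
    (hψconv : ConvexOn ℝ Set.univ ψ)
    (hΔ : ∀ s : ℝ, Δ s = (∫ a in (am s)..(ap s), ψ ((xs s - a) / s))
        + (∫ a in (am tf)..(am s), ψ (u₀ a))
        + (∫ a in (ap s)..(ap tf), ψ (u₀ a))) :
    AntitoneOn Δ (Set.Icc tstar tf) ∧
    Δ tf = tf * ∫ v in (u₀ (ap tf))..(u₀ (am tf)), ψ v ∧
    tf * (∫ v in (u₀ (ap tf))..(u₀ (am tf)), ψ v) ≤ Δ tstar := by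
  obtain rfl : Δ = shockEntropy ψ u₀ xs am ap tf := funext hΔ
  have hanti : AntitoneOn (shockEntropy ψ u₀ xs am ap tf) (Icc tstar tf) :=
    antitoneOn_shockEntropy htstar hψconv hu₀ (hxs.differentiableOn one_ne_zero)
      (ham.differentiableOn one_ne_zero) (hap.differentiableOn one_ne_zero) hlt hend_m hend_p havg
  have htfI : tf ∈ Icc tstar tf := right_mem_Icc.2 htf
  have hfin := shockEntropy_self (ψ := ψ) (htstar.trans_le htf).ne' (hend_m tf htfI)
    (hend_p tf htfI)
  exact ⟨hanti, hfin, hfin ▸ hanti (left_mem_Icc.2 htf) htfI htf⟩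

/-- Dissipation of every convex entropy by a Burgers shock satisfying the average
(Maxwell/Rankine–Hugoniot) condition: the interpolating functional `Δ_ψ` is nonincreasing
on `[t_*, t_f]`, its final value equals `t_f·∫_{u₊(t_f)}^{u₋(t_f)} ψ(v) dv`, and therefore
`t_f·∫_{u₊(t_f)}^{u₋(t_f)} ψ(v) dv ≤ Δ_ψ(t_*)`. -/
theorem convex_entropy_dissipation
    (tstar tf : ℝ) (u₀ xs am ap : ℝ → ℝ) (ψ : ℝ → ℝ) (Δ : ℝ → ℝ)
    (htstar : 0 < tstar) (htf : tstar ≤ tf)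
    (hu₀ : Continuous u₀)
    (hxs : ContDiffOn ℝ 1 xs (Set.Icc tstar tf))
    (ham : ContDiffOn ℝ 1 am (Set.Icc tstar tf))
    (hap : ContDiffOn ℝ 1 ap (Set.Icc tstar tf))
    (hlt : ∀ s ∈ Set.Icc tstar tf, am s < ap s)
    (hmono_m : AntitoneOn am (Set.Icc tstar tf))
    (hmono_p : MonotoneOn ap (Set.Icc tstar tf))
    (hend_m : ∀ s ∈ Set.Icc tstar tf, xs s = am s + s * u₀ (am s))
    (hend_p : ∀ s ∈ Set.Icc tstar tf, xs s = ap s + s * u₀ (ap s))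
    (havg : ∀ s ∈ Set.Icc tstar tf,
      derivWithin xs (Set.Icc tstar tf) s
        = (1 / (ap s - am s)) * ∫ a in (am s)..(ap s), (xs s - a) / s)
    (hψconv : ConvexOn ℝ Set.univ ψ)
    (hψdiff : Differentiable ℝ ψ)
    (hΔ : ∀ s : ℝ, Δ s = (∫ a in (am s)..(ap s), ψ ((xs s - a) / s))
        + (∫ a in (am tf)..(am s), ψ (u₀ a))
        + (∫ a in (ap s)..(ap tf), ψ (u₀ a))) :
    AntitoneOn Δ (Set.Icc tstar tf) ∧
    Δ tf = tf * ∫ v in (u₀ (ap tf))..(u₀ (am tf)), ψ v ∧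
    tf * (∫ v in (u₀ (ap tf))..(u₀ (am tf)), ψ v) ≤ Δ tstar :=
  convex_entropy_dissipation_general tstar tf u₀ xs am ap ψ Δ htstar htf hu₀ hxs ham hap hlt hend_m
    hend_p havg hψconv hΔ
end

section
/- Let 0 < t_* < t_f, let u₀: ℝ → ℝ be continuous, and let x_*, a₋, a₊: [t_*, t_f] → ℝ be continuously differentiable with a₋(s) < a₊(s), satisfying the endpoint relations x_*(s) = a₋(s) + s·u₀(a₋(s)) = a₊(s) + s·u₀(a₊(s)) for all s. Let ψ: ℝ → ℝ be continuously differentiable, and define Δ_ψ(s) = ∫_{a₋(s)}^{a₊(s)} ψ((x_*(s) − a)/s) da + ∫_{a₋(t_f)}^{a₋(s)} ψ(u₀(a)) da + ∫_{a₊(s)}^{a₊(t_f)} ψ(u₀(a)) da. Then Δ_ψ is differentiable on (t_*, t_f) and its derivative is given by d/ds Δ_ψ(s) = (1/s)·∫_{a₋(s)}^{a₊(s)} ψ'((x_*(s) − a)/s)·( x_*'(s) − (x_*(s) − a)/s ) da; i.e. the boundary terms arising from the moving endpoints a_±(s) cancel exactly because (x_*(s) − a_±(s))/s = u₀(a_±(s)).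 -/
/-!
In the variable `v = (x_*(t) - a) / t` the shock integral becomes
`t · ∫_{v₊(t)}^{v₋(t)} ψ`, with `v_±(t) = (x_*(t) - a_±(t)) / t`, so `Δ_ψ` is a sum of integrals
of fixed continuous functions between moving endpoints, and the Leibniz rule differentiates it.
The endpoint relations say `v_±(s) = u₀(a_±(s))`, so the terms `ψ(u₀(a_±)) · a_±'` from the tails
cancel against part of the shock's boundary terms. What is left, `∫ ψ + [ψ(v)(x_*' - v)]`, is
exactly what integration by parts gives for `∫ ψ'(v)(x_*' - v) dv`, which is the claimed
integral after the same substitution.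
-/

open Filter Topology

theorem intervalIntegral.integral_comp_sub_div_eq_smul {E : Type*} [NormedAddCommGroup E]
    [NormedSpace ℝ E] (f : ℝ → E) {s : ℝ} (hs : s ≠ 0) (X b c : ℝ) :
    ∫ a in b..c, f ((X - a) / s) = s • ∫ v in (X - c) / s..(X - b) / s, f v := by
  simp only [sub_div, intervalIntegral.integral_comp_sub_div f hs]

theorem hasDerivAt_integral_of_hasDerivAt_bounds {E : Type*} [NormedAddCommGroup E]
    [NormedSpace ℝ E] [CompleteSpace E] {f : ℝ → E} (hf : Continuous f) {a b : ℝ → ℝ}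
    {a' b' s : ℝ} (ha : HasDerivAt a a' s) (hb : HasDerivAt b b' s) :
    HasDerivAt (fun t => ∫ x in a t..b t, f x) (b' • f (b s) - a' • f (a s)) s := by
  have hF : ∀ y, HasDerivAt (fun u => ∫ x in (0 : ℝ)..u, f x) (f y) y := fun y =>
    intervalIntegral.integral_hasDerivAt_right (hf.intervalIntegrable _ _)
      (hf.stronglyMeasurableAtFilter _ _) hf.continuousAt
  have hsplit : (fun t => ∫ x in a t..b t, f x)
      = fun t => (∫ x in (0 : ℝ)..b t, f x) - ∫ x in (0 : ℝ)..a t, f x := by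
    funext t
    exact (intervalIntegral.integral_interval_sub_left (hf.intervalIntegrable _ _)
      (hf.intervalIntegrable _ _)).symm
  rw [hsplit]
  exact ((hF (b s)).scomp s hb).sub ((hF (a s)).scomp s ha)

theorem integral_deriv_mul_sub_eq {ψ : ℝ → ℝ} (hψ : ContDiff ℝ 1 ψ) (D p q : ℝ) :
    ∫ v in p..q, deriv ψ v * (D - v)
      = ψ q * (D - q) - ψ p * (D - p) + ∫ v in p..q, ψ v := by
  have hparts := intervalIntegral.integral_mul_deriv_eq_deriv_mul (a := p) (b := q)
    (u := fun v => D - v) (u' := fun _ => -1) (v := ψ) (v' := deriv ψ)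
    (fun x _ => (hasDerivAt_id x).const_sub D)
    (fun x _ => (hψ.differentiable one_ne_zero x).hasDerivAt)
    intervalIntegrable_const ((hψ.continuous_deriv le_rfl).intervalIntegrable _ _)
  simp only [neg_one_mul, intervalIntegral.integral_neg] at hparts
  simp_rw [mul_comm (deriv ψ _)]
  rw [hparts]
  ring

theorem delta_psi_derivative_general
    (tstar tf : ℝ) (u₀ xs am ap : ℝ → ℝ) (ψ : ℝ → ℝ) (Δ : ℝ → ℝ)
    (htstar : 0 < tstar)
    (hu₀ : Continuous u₀)
    (hxs : ContDiffOn ℝ 1 xs (Set.Icc tstar tf))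
    (ham : ContDiffOn ℝ 1 am (Set.Icc tstar tf))
    (hap : ContDiffOn ℝ 1 ap (Set.Icc tstar tf))
    (hend_m : ∀ s ∈ Set.Icc tstar tf, xs s = am s + s * u₀ (am s))
    (hend_p : ∀ s ∈ Set.Icc tstar tf, xs s = ap s + s * u₀ (ap s))
    (hψ : ContDiff ℝ 1 ψ)
    (hΔ : ∀ s : ℝ, Δ s = (∫ a in (am s)..(ap s), ψ ((xs s - a) / s))
        + (∫ a in (am tf)..(am s), ψ (u₀ a))
        + (∫ a in (ap s)..(ap tf), ψ (u₀ a))) :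
    ∀ s ∈ Set.Ioo tstar tf,
      HasDerivAt Δ
        ((1 / s) * ∫ a in (am s)..(ap s),
          deriv ψ ((xs s - a) / s) * (deriv xs s - (xs s - a) / s)) s := by
  intro s hs
  have hs0 : s ≠ 0 := (htstar.trans hs.1).ne'
  have hsIcc : s ∈ Set.Icc tstar tf := Set.Ioo_subset_Icc_self hs
  have hderiv {g : ℝ → ℝ} (hg : ContDiffOn ℝ 1 g (Set.Icc tstar tf)) :
      HasDerivAt g (deriv g s) s :=
    ((hg.differentiableOn one_ne_zero).differentiableAt (Icc_mem_nhds hs.1 hs.2)).hasDerivAt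
  have hspeed {a : ℝ → ℝ} (ha : ContDiffOn ℝ 1 a (Set.Icc tstar tf)) :
      HasDerivAt (fun t => (xs t - a t) / t)
        (((deriv xs s - deriv a s) * s - (xs s - a s) * 1) / s ^ 2) s :=
    ((hderiv hxs).sub (hderiv ha)).div (hasDerivAt_id s) hs0
  have hΔ_eq : Δ =ᶠ[𝓝 s] fun t => t * (∫ v in (xs t - ap t) / t..(xs t - am t) / t, ψ v)
      + (∫ a in (am tf)..(am t), ψ (u₀ a)) + (∫ a in (ap t)..(ap tf), ψ (u₀ a)) := by
    filter_upwards [eventually_ne_nhds hs0] with t ht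
    rw [hΔ, intervalIntegral.integral_comp_sub_div_eq_smul ψ ht, smul_eq_mul]
  have hψu₀ : Continuous (fun a => ψ (u₀ a)) := hψ.continuous.comp hu₀
  refine HasDerivAt.congr_of_eventuallyEq ?_ hΔ_eq
  refine HasDerivAt.congr_deriv ((((hasDerivAt_id s).mul
    (hasDerivAt_integral_of_hasDerivAt_bounds hψ.continuous (hspeed hap) (hspeed ham))).add
    (hasDerivAt_integral_of_hasDerivAt_bounds hψu₀ (hasDerivAt_const s _) (hderiv ham))).add
    (hasDerivAt_integral_of_hasDerivAt_bounds hψu₀ (hderiv hap) (hasDerivAt_const s _))) ?_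
  have hum : u₀ (am s) = (xs s - am s) / s := by
    rw [eq_div_iff hs0]; linarith [hend_m s hsIcc]
  have hup : u₀ (ap s) = (xs s - ap s) / s := by
    rw [eq_div_iff hs0]; linarith [hend_p s hsIcc]
  rw [intervalIntegral.integral_comp_sub_div_eq_smul (fun v => deriv ψ v * (deriv xs s - v)) hs0,
    integral_deriv_mul_sub_eq hψ, hum, hup]
  simp only [id_eq, smul_eq_mul]
  field_simp
  ring

/-- Differentiation of the interpolating functional `Δ_ψ` along a Burgers shock: the
boundary terms from the moving endpoints `a_±(s)` cancel because
`(x_*(s) − a_±(s))/s = u₀(a_±(s))`, leaving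
`Δ_ψ'(s) = (1/s)·∫_{a₋(s)}^{a₊(s)} ψ'((x_*(s)−a)/s)·(x_*'(s) − (x_*(s)−a)/s) da`. -/
theorem delta_psi_derivative
    (tstar tf : ℝ) (u₀ xs am ap : ℝ → ℝ) (ψ : ℝ → ℝ) (Δ : ℝ → ℝ)
    (htstar : 0 < tstar) (htf : tstar < tf)
    (hu₀ : Continuous u₀)
    (hxs : ContDiffOn ℝ 1 xs (Set.Icc tstar tf))
    (ham : ContDiffOn ℝ 1 am (Set.Icc tstar tf))
    (hap : ContDiffOn ℝ 1 ap (Set.Icc tstar tf))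
    (hlt : ∀ s ∈ Set.Icc tstar tf, am s < ap s)
    (hend_m : ∀ s ∈ Set.Icc tstar tf, xs s = am s + s * u₀ (am s))
    (hend_p : ∀ s ∈ Set.Icc tstar tf, xs s = ap s + s * u₀ (ap s))
    (hψ : ContDiff ℝ 1 ψ)
    (hΔ : ∀ s : ℝ, Δ s = (∫ a in (am s)..(ap s), ψ ((xs s - a) / s))
        + (∫ a in (am tf)..(am s), ψ (u₀ a))
        + (∫ a in (ap s)..(ap tf), ψ (u₀ a))) :
    ∀ s ∈ Set.Ioo tstar tf,
      HasDerivAt Δ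
        ((1 / s) * ∫ a in (am s)..(ap s),
          deriv ψ ((xs s - a) / s) * (deriv xs s - (xs s - a) / s)) s :=
  delta_psi_derivative_general tstar tf u₀ xs am ap ψ Δ htstar hu₀ hxs ham hap hend_m hend_p hψ hΔ
end

section
/- Let c₋ < c₊ be real numbers, let f: [c₋, c₊] → ℝ be continuously differentiable, and let Δ ∈ ℝ satisfy 1 + f'(c)·Δ ≥ 0 for all c ∈ [c₋, c₊] and D := (c₊ − c₋) + (f(c₊) − f(c₋))·Δ > 0. Define p(c) := (1 + f'(c)·Δ)/D. Then p ≥ 0 and ∫_{c₋}^{c₊} p(c) dc = 1, i.e. p is a probability density on [c₋, c₊]; and if moreover ∫_{c₋}^{c₊} f(c) dc = (c₊ − c₋)·(f(c₋) + f(c₊))/2, then ∫_{c₋}^{c₊} f(c)·p(c) dc = (f(c₋) + f(c₊))/2. -/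
/-!
Both identities reduce to the fundamental theorem of calculus: `1 + f'·Δ` is the derivative of
`c + f(c)·Δ`, so it integrates to `D`, and `f·f'` is the derivative of `f²/2`. Hence
`∫ f·(1 + f'·Δ) = (c₊ − c₋)(f(c₋) + f(c₊))/2 + (f(c₊)² − f(c₋)²)/2·Δ`,
which factors as `(f(c₋) + f(c₊))/2 · D`.
-/

open intervalIntegral Set
open MeasureTheory (volume)

section TransportedDensity

variable {a b : ℝ} {f f' : ℝ → ℝ}

theorem integral_one_add_deriv_mul_const (Δ : ℝ)
    (hf : ∀ x ∈ uIcc a b, HasDerivAt f (f' x) x) (hf' : IntervalIntegrable f' volume a b) :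
    ∫ x in a..b, 1 + f' x * Δ = (b - a) + (f b - f a) * Δ := by
  rw [integral_add intervalIntegrable_const (hf'.mul_const Δ), integral_mul_const,
    integral_eq_sub_of_hasDerivAt hf hf']
  simp

theorem integral_mul_deriv_eq_sq_sub (hf : ∀ x ∈ uIcc a b, HasDerivAt f (f' x) x)
    (hf' : IntervalIntegrable f' volume a b) :
    ∫ x in a..b, f x * f' x = (f b ^ 2 - f a ^ 2) / 2 := by
  rw [integral_eq_sub_of_hasDerivAt (f := fun x => f x * f x / 2)
    (fun x hx => (((hf x hx).mul (hf x hx)).div_const 2).congr_deriv (by ring))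
    (hf'.continuousOn_mul (HasDerivAt.continuousOn hf))]
  ring

theorem integral_mul_one_add_deriv_mul_const (Δ : ℝ)
    (hf : ∀ x ∈ uIcc a b, HasDerivAt f (f' x) x) (hf' : IntervalIntegrable f' volume a b) :
    ∫ x in a..b, f x * (1 + f' x * Δ) = (∫ x in a..b, f x) + (f b ^ 2 - f a ^ 2) / 2 * Δ := by
  have hfc : ContinuousOn f (uIcc a b) := HasDerivAt.continuousOn hf
  simp_rw [mul_one_add, ← mul_assoc]
  rw [integral_add hfc.intervalIntegrable ((hf'.continuousOn_mul hfc).mul_const Δ),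
    integral_mul_const, integral_mul_deriv_eq_sq_sub hf hf']

end TransportedDensity

/-- The transported distribution in the geometric construction of the backward stochastic
Burgers flow: `p(c) = (1 + f'(c)·Δ)/D` with `D = (c₊ − c₋) + (f(c₊) − f(c₋))·Δ > 0` is a
probability density on `[c₋, c₊]`, and if `f` has mean `(f(c₋)+f(c₊))/2` with respect to
the uniform density, then it also has mean `(f(c₋)+f(c₊))/2` with respect to `p`. -/
theorem transported_density_is_probability (cm cp Δ : ℝ) (f f' : ℝ → ℝ)
    (hlt : cm < cp)
    (hderiv : ∀ c ∈ Set.Icc cm cp, HasDerivAt f (f' c) c)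
    (hcont : ContinuousOn f' (Set.Icc cm cp))
    (hnonneg : ∀ c ∈ Set.Icc cm cp, 0 ≤ 1 + f' c * Δ)
    (hD : 0 < (cp - cm) + (f cp - f cm) * Δ) :
    (∀ c ∈ Set.Icc cm cp,
      0 ≤ (1 + f' c * Δ) / ((cp - cm) + (f cp - f cm) * Δ)) ∧
    (∫ c in cm..cp, (1 + f' c * Δ) / ((cp - cm) + (f cp - f cm) * Δ)) = 1 ∧
    ((∫ c in cm..cp, f c) = (cp - cm) * (f cm + f cp) / 2 →
      (∫ c in cm..cp, f c * ((1 + f' c * Δ) / ((cp - cm) + (f cp - f cm) * Δ)))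
        = (f cm + f cp) / 2) := by
  have hIcc : uIcc cm cp = Icc cm cp := uIcc_of_le hlt.le
  have hf : ∀ x ∈ uIcc cm cp, HasDerivAt f (f' x) x := hIcc ▸ hderiv
  have hf' : IntervalIntegrable f' volume cm cp := (hIcc ▸ hcont).intervalIntegrable
  refine ⟨fun c hc => div_nonneg (hnonneg c hc) hD.le, ?_, fun hmean => ?_⟩
  · rw [integral_div, integral_one_add_deriv_mul_const Δ hf hf', div_self hD.ne']
  · simp_rw [← mul_div_assoc]
    rw [integral_div, integral_mul_one_add_deriv_mul_const Δ hf hf', hmean, div_eq_iff hD.ne']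
    ring
end

section
/- Fix L > 0 and 0 < s < t. For ν > 0 define f_ν(a) = cosh(L·a/(2νs))·exp(−t·a²/(4νs(t−s))) for a ∈ ℝ, and Z_ν = ∫_ℝ f_ν(a) da. Then f_ν is integrable with Z_ν ∈ (0, ∞), and lim_{ν→0⁺} 4νs·ln( f_ν(0)/Z_ν ) = −L²·(1 − s/t). In particular, the normalized density at the shock location is transcendentally small as ν → 0: the probability for a backward stochastic Lagrangian trajectory of the Khokhlov solution to remain at the shock decays like exp(−L²(1 − s/t)/(4νs)). -/
/-!
Writing `cosh (c a) = (e^{ca} + e^{-ca}) / 2` and completing the square, the normalizing constant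
is an explicit Gaussian integral: `Z_ν = √(4πs(t−s)ν/t) · exp (L²(t−s)/(4νst))`, while `f_ν(0) = 1`.
Hence `4νs · log (f_ν(0)/Z_ν) = −2s · ν log (4πs(t−s)ν/t) − L²(1 − s/t)`, and `ν log (Kν) → 0`.
-/

open MeasureTheory Filter Real

section GaussianWithLinearTerm

variable {b : ℝ} (c : ℝ)

lemma neg_mul_sq_add_mul_eq (hb : b ≠ 0) (a : ℝ) :
    -b * a ^ 2 + c * a = -b * (a - c / (2 * b)) ^ 2 + c ^ 2 / (4 * b) := by
  field_simp
  ring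

lemma integrable_exp_neg_mul_sq_add_mul (hb : 0 < b) :
    Integrable fun a : ℝ => exp (-b * a ^ 2 + c * a) := by
  simp_rw [neg_mul_sq_add_mul_eq c hb.ne', exp_add]
  exact ((integrable_exp_neg_mul_sq hb).comp_sub_right _).mul_const _

lemma integral_exp_neg_mul_sq_add_mul (hb : 0 < b) :
    ∫ a : ℝ, exp (-b * a ^ 2 + c * a) = √(π / b) * exp (c ^ 2 / (4 * b)) := by
  simp_rw [neg_mul_sq_add_mul_eq c hb.ne', exp_add]
  rw [integral_mul_const, integral_sub_right_eq_self (fun a => exp (-b * a ^ 2)),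
    integral_gaussian]

lemma cosh_mul_mul_exp_neg_mul_sq (a : ℝ) :
    cosh (c * a) * exp (-b * a ^ 2)
      = (exp (-b * a ^ 2 + c * a) + exp (-b * a ^ 2 + -c * a)) / 2 := by
  rw [cosh_eq, exp_add, exp_add]
  ring_nf

lemma integrable_cosh_mul_mul_exp_neg_mul_sq (hb : 0 < b) :
    Integrable fun a : ℝ => cosh (c * a) * exp (-b * a ^ 2) := by
  simp_rw [cosh_mul_mul_exp_neg_mul_sq]
  exact ((integrable_exp_neg_mul_sq_add_mul c hb).add
    (integrable_exp_neg_mul_sq_add_mul (-c) hb)).div_const 2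

lemma integral_cosh_mul_mul_exp_neg_mul_sq (hb : 0 < b) :
    ∫ a : ℝ, cosh (c * a) * exp (-b * a ^ 2) = √(π / b) * exp (c ^ 2 / (4 * b)) := by
  simp_rw [cosh_mul_mul_exp_neg_mul_sq]
  rw [integral_div, integral_add (integrable_exp_neg_mul_sq_add_mul c hb)
    (integrable_exp_neg_mul_sq_add_mul (-c) hb), integral_exp_neg_mul_sq_add_mul c hb,
    integral_exp_neg_mul_sq_add_mul (-c) hb]
  ring_nf

end GaussianWithLinearTerm

lemma tendsto_mul_log_const_mul_nhds_zero {K : ℝ} (hK : K ≠ 0) :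
    Tendsto (fun x : ℝ => x * log (K * x)) (nhds 0) (nhds 0) := by
  have hcont : Continuous fun x : ℝ => K⁻¹ * (K * x * log (K * x)) :=
    continuous_const.mul (continuous_mul_log.comp (continuous_const_mul K))
  have h := hcont.tendsto 0
  simp only [mul_zero, zero_mul] at h
  convert h using 2 with x
  field_simp

section Khokhlov

variable (L s t ν : ℝ)

/-- The unnormalized backward transition density `f_ν` from the shock `(0, t)` to time `s`. -/
noncomputable def khokhlovDensity (a : ℝ) : ℝ :=
  cosh (L * a / (2 * ν * s)) * exp (-(t * a ^ 2) / (4 * ν * s * (t - s)))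

variable {L s t ν}

lemma khokhlovDensity_eq (hs : 0 < s) (hst : s < t) (hν : 0 < ν) (a : ℝ) :
    khokhlovDensity L s t ν a
      = cosh (L / (2 * ν * s) * a) * exp (-(t / (4 * ν * s * (t - s))) * a ^ 2) := by
  have : t - s ≠ 0 := (sub_pos.2 hst).ne'
  unfold khokhlovDensity
  congr 2 <;> field_simp

lemma khokhlovDensity_zero : khokhlovDensity L s t ν 0 = 1 := by
  simp [khokhlovDensity]

lemma integrable_khokhlovDensity (hs : 0 < s) (hst : s < t) (hν : 0 < ν) :
    Integrable (khokhlovDensity L s t ν) := by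
  have hts : 0 < t - s := sub_pos.2 hst
  have ht : 0 < t := hs.trans hst
  rw [funext (khokhlovDensity_eq hs hst hν)]
  exact integrable_cosh_mul_mul_exp_neg_mul_sq _ (by positivity)

lemma integral_khokhlovDensity (hs : 0 < s) (hst : s < t) (hν : 0 < ν) :
    ∫ a, khokhlovDensity L s t ν a
      = √(4 * π * s * (t - s) / t * ν) * exp (L ^ 2 * (t - s) / (4 * ν * s * t)) := by
  have hts : 0 < t - s := sub_pos.2 hst
  have ht : 0 < t := hs.trans hst
  rw [funext (khokhlovDensity_eq hs hst hν),
    integral_cosh_mul_mul_exp_neg_mul_sq _ (by positivity)]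
  congr 2
  · field_simp
  · field_simp
    ring

lemma mul_log_khokhlovDensity_zero_div_integral (hs : 0 < s) (hst : s < t) (hν : 0 < ν) :
    4 * ν * s * log (khokhlovDensity L s t ν 0 / ∫ a, khokhlovDensity L s t ν a)
      = -2 * s * (ν * log (4 * π * s * (t - s) / t * ν)) - L ^ 2 * (1 - s / t) := by
  have hts : 0 < t - s := sub_pos.2 hst
  have ht : 0 < t := hs.trans hst
  rw [khokhlovDensity_zero, integral_khokhlovDensity hs hst hν, one_div, log_inv,
    log_mul (by positivity) (exp_ne_zero _), log_exp, log_sqrt (by positivity)]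
  field_simp
  ring

end Khokhlov

theorem khokhlov_shock_probability_decay_general (L s t : ℝ)
    (hs : 0 < s) (hst : s < t) :
    (∀ ν > (0 : ℝ),
      Integrable (fun a : ℝ =>
        Real.cosh (L * a / (2 * ν * s)) * Real.exp (-(t * a ^ 2) / (4 * ν * s * (t - s)))) ∧
      0 < ∫ a : ℝ,
        Real.cosh (L * a / (2 * ν * s)) * Real.exp (-(t * a ^ 2) / (4 * ν * s * (t - s)))) ∧
    Tendsto (fun ν : ℝ => 4 * ν * s *
        Real.log ((Real.cosh (L * 0 / (2 * ν * s))
            * Real.exp (-(t * (0 : ℝ) ^ 2) / (4 * ν * s * (t - s)))) /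
          ∫ a : ℝ,
            Real.cosh (L * a / (2 * ν * s)) * Real.exp (-(t * a ^ 2) / (4 * ν * s * (t - s)))))
      (nhdsWithin 0 (Set.Ioi 0)) (nhds (-L ^ 2 * (1 - s / t))) := by
  change (∀ ν > (0 : ℝ), Integrable (khokhlovDensity L s t ν) ∧
      0 < ∫ a, khokhlovDensity L s t ν a) ∧
    Tendsto (fun ν => 4 * ν * s *
        log (khokhlovDensity L s t ν 0 / ∫ a, khokhlovDensity L s t ν a))
      (nhdsWithin 0 (Set.Ioi 0)) (nhds (-L ^ 2 * (1 - s / t)))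
  have hts : 0 < t - s := sub_pos.2 hst
  have ht : 0 < t := hs.trans hst
  have hK : 4 * π * s * (t - s) / t ≠ 0 := by positivity
  refine ⟨fun ν hν => ⟨integrable_khokhlovDensity hs hst hν, ?_⟩, ?_⟩
  · rw [integral_khokhlovDensity hs hst hν]
    positivity
  · have hlim := ((tendsto_mul_log_const_mul_nhds_zero hK).const_mul (-2 * s)).sub_const
      (L ^ 2 * (1 - s / t))
    rw [mul_zero, zero_sub, ← neg_mul] at hlim
    refine (hlim.mono_left nhdsWithin_le_nhds).congr' ?_
    filter_upwards [self_mem_nhdsWithin] with ν hν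
    exact (mul_log_khokhlovDensity_zero_div_integral hs hst hν).symm

/-- For the Khokhlov solution, the normalized backward transition density at the shock
location is transcendentally small as `ν → 0⁺`: with
`f_ν(a) = cosh(La/(2νs))·exp(−ta²/(4νs(t−s)))` and `Z_ν = ∫ f_ν`, one has
`f_ν` integrable with positive integral, and
`4νs·ln(f_ν(0)/Z_ν) → −L²(1 − s/t)` as `ν → 0⁺`. -/
theorem khokhlov_shock_probability_decay (L s t : ℝ)
    (hL : 0 < L) (hs : 0 < s) (hst : s < t) :
    (∀ ν > (0 : ℝ),
      Integrable (fun a : ℝ =>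
        Real.cosh (L * a / (2 * ν * s)) * Real.exp (-(t * a ^ 2) / (4 * ν * s * (t - s)))) ∧
      0 < ∫ a : ℝ,
        Real.cosh (L * a / (2 * ν * s)) * Real.exp (-(t * a ^ 2) / (4 * ν * s * (t - s)))) ∧
    Tendsto (fun ν : ℝ => 4 * ν * s *
        Real.log ((Real.cosh (L * 0 / (2 * ν * s))
            * Real.exp (-(t * (0 : ℝ) ^ 2) / (4 * ν * s * (t - s)))) /
          ∫ a : ℝ,
            Real.cosh (L * a / (2 * ν * s)) * Real.exp (-(t * a ^ 2) / (4 * ν * s * (t - s)))))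
      (nhdsWithin 0 (Set.Ioi 0)) (nhds (-L ^ 2 * (1 - s / t))) :=
  khokhlov_shock_probability_decay_general L s t hs hst
end

section
/- Let d ≥ 1, ν > 0, t > 0, and let φ₀: ℝ^d → ℝ be continuously differentiable with ∇φ₀ bounded on ℝ^d. For x ∈ ℝ^d define I(x) = ∫_{ℝ^d} exp( −|x−a|²/(4νt) − φ₀(a)/(2ν) ) da. Then I(x) is finite and positive for every x, the function I is differentiable, and −2ν·∇_x ln I(x) = ∫_{ℝ^d} ∇φ₀(a)·p_x(a) da, where p_x(a) := exp( −|x−a|²/(4νt) − φ₀(a)/(2ν) ) / I(x) is a probability density on ℝ^d. That is, the Hopf–Cole formula for the viscous Burgers velocity u(x,t) = −2ν∇_x ln I(x) coincides with the Constantin–Iyer representation u(x,t) = ∫ u₀(a) p_x(a) da with u₀ = ∇φ₀. -/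
/-!
A Lipschitz potential `ψ` grows at most linearly, so the Gaussian factor dominates and the weight
`W x a = exp (-‖x - a‖² / s - ψ a)` is integrable. After the substitution `a = x - w` the
dependence on `x` sits in `ψ (x - w)` alone, and the resulting domination is uniform for `x` near
`x₀`; differentiating under the integral sign gives `∇ I x = -∫ W x a • ∇ψ a`, hence
`∇ (log I) x` is minus the average of `∇ψ` against the probability density `W x · / I x`.
For `s = 4νt` and `ψ = φ₀ / (2ν)` this is the Constantin–Iyer average of `u₀ = ∇φ₀`.
-/

open MeasureTheory Real Gradient

section

variable {F : Type*} [NormedAddCommGroup F] [InnerProductSpace ℝ F] [CompleteSpace F]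
  {f : F → ℝ} {g : F} {x : F}

theorem HasGradientAt.log (hf : HasGradientAt f g x) (hx : f x ≠ 0) :
    HasGradientAt (fun y => Real.log (f y)) ((f x)⁻¹ • g) x := by
  rw [hasGradientAt_iff_hasFDerivAt] at hf ⊢
  simpa only [map_smul] using hf.log hx

theorem HasGradientAt.div_const (hf : HasGradientAt f g x) (c : ℝ) :
    HasGradientAt (fun y => f y / c) (c⁻¹ • g) x := by
  rw [hasGradientAt_iff_hasFDerivAt] at hf ⊢
  simpa only [div_eq_mul_inv, map_smul] using hf.mul_const c⁻¹

theorem lipschitzWith_of_norm_gradient_le {C : NNReal} (hf : Differentiable ℝ f)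
    (hC : ∀ x, ‖∇ f x‖ ≤ C) : LipschitzWith C f :=
  lipschitzWith_of_nnnorm_fderiv_le hf fun x => by
    rw [← NNReal.coe_le_coe, coe_nnnorm]
    simpa only [gradient, LinearIsometryEquiv.norm_map] using hC x

end

section

variable {E : Type*} [NormedAddCommGroup E]

noncomputable def hopfColeWeight (s : ℝ) (ψ : E → ℝ) (x a : E) : ℝ := exp (-‖x - a‖ ^ 2 / s - ψ a)

variable {s : ℝ} {ψ : E → ℝ} {K : NNReal}

theorem hopfColeWeight_sub_le (hψ : LipschitzWith K ψ) (x w : E) :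
    hopfColeWeight s ψ x (x - w) ≤ exp (K * ‖x‖ - ψ 0) * exp (-s⁻¹ * ‖w‖ ^ 2 + K * ‖w‖) := by
  have hlip := hψ.dist_le_mul (x - w) 0
  rw [Real.dist_eq, dist_zero_right] at hlip
  have hgrowth : ψ 0 - ψ (x - w) ≤ K * (‖x‖ + ‖w‖) := by
    linarith [neg_abs_le (ψ (x - w) - ψ 0),
      mul_le_mul_of_nonneg_left (norm_sub_le x w) K.coe_nonneg]
  rw [hopfColeWeight, sub_sub_cancel, ← exp_add, exp_le_exp, neg_div, div_eq_inv_mul]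
  linarith

theorem hopfColeWeight_pos (x a : E) : 0 < hopfColeWeight s ψ x a := exp_pos _

theorem hasFDerivAt_hopfColeWeight_sub [NormedSpace ℝ E] (hψ : Differentiable ℝ ψ) (w x : E) :
    HasFDerivAt (fun y => hopfColeWeight s ψ y (y - w))
      (-(hopfColeWeight s ψ x (x - w) • fderiv ℝ ψ (x - w))) x := by
  have hψw : HasFDerivAt (fun y => ψ (y - w)) (fderiv ℝ ψ (x - w)) x :=
    (hψ (x - w)).hasFDerivAt.comp x ((hasFDerivAt_id x).sub_const w)
  simpa only [hopfColeWeight, sub_sub_cancel, smul_neg] using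
    (hψw.const_sub (-‖w‖ ^ 2 / s)).exp

end

section

variable {E : Type*} [NormedAddCommGroup E] [InnerProductSpace ℝ E] [FiniteDimensional ℝ E]
  [MeasurableSpace E] [BorelSpace E] {s : ℝ} {ψ : E → ℝ} {K : NNReal}

theorem integrable_exp_neg_mul_sq_norm_add_mul_norm {b : ℝ} (hb : 0 < b) (c : ℝ) :
    Integrable (fun v : E => exp (-b * ‖v‖ ^ 2 + c * ‖v‖)) := by
  have hgauss : Integrable (fun v : E => exp (-(b / 2) * ‖v‖ ^ 2)) := by
    refine (GaussianFourier.integrable_cexp_neg_mul_sq_norm_add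
      (b := ((b / 2 : ℝ) : ℂ)) (by simpa using half_pos hb) 0 (0 : E)).norm.congr ?_
    filter_upwards with v
    simp [Complex.norm_exp, ← Complex.ofReal_pow]
  refine (hgauss.const_mul (exp (c ^ 2 / (2 * b)))).mono'
    (by fun_prop) (.of_forall fun v => ?_)
  rw [norm_of_nonneg (exp_nonneg _), ← exp_add, exp_le_exp]
  have : 0 ≤ b / 2 * (‖v‖ - c / b) ^ 2 := by positivity
  have e : b / 2 * (‖v‖ - c / b) ^ 2 = b / 2 * ‖v‖ ^ 2 - c * ‖v‖ + c ^ 2 / (2 * b) := by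
    field_simp; ring
  linarith

theorem integrable_hopfColeWeight_sub (hs : 0 < s) (hψ : LipschitzWith K ψ) (x : E) :
    Integrable (fun w => hopfColeWeight s ψ x (x - w)) := by
  refine ((integrable_exp_neg_mul_sq_norm_add_mul_norm (inv_pos.2 hs) K).const_mul
    (exp (K * ‖x‖ - ψ 0))).mono' ?_ (.of_forall fun w => ?_)
  · have := hψ.continuous
    unfold hopfColeWeight; fun_prop
  · exact (norm_of_nonneg (exp_nonneg _)).trans_le (hopfColeWeight_sub_le hψ x w)

theorem integrable_hopfColeWeight (hs : 0 < s) (hψ : LipschitzWith K ψ) (x : E) :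
    Integrable (hopfColeWeight s ψ x) := by
  simpa using (integrable_hopfColeWeight_sub hs hψ x).comp_sub_left x

theorem integral_hopfColeWeight_pos (hs : 0 < s) (hψ : LipschitzWith K ψ) (x : E) :
    0 < ∫ a, hopfColeWeight s ψ x a :=
  integral_exp_pos (integrable_hopfColeWeight hs hψ x)

theorem hasFDerivAt_integral_hopfColeWeight (hs : 0 < s) (hψ : LipschitzWith K ψ)
    (hψd : Differentiable ℝ ψ) (x₀ : E) :
    HasFDerivAt (fun x => ∫ a, hopfColeWeight s ψ x a)
      (-∫ a, hopfColeWeight s ψ x₀ a • fderiv ℝ ψ a) x₀ := by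
  -- substituting `a = x - w` moves the dependence on `x` into `ψ`
  have htrans : (fun x => ∫ a, hopfColeWeight s ψ x a) =
      fun x => ∫ w, hopfColeWeight s ψ x (x - w) :=
    funext fun x => (integral_sub_left_eq_self _ _ x).symm
  rw [htrans, ← integral_sub_left_eq_self _ _ x₀, ← integral_neg]
  set C := exp (K * (‖x₀‖ + 1) - ψ 0)
  have hbound : ∀ x ∈ Metric.ball x₀ 1, ∀ w,
      hopfColeWeight s ψ x (x - w) ≤ C * exp (-s⁻¹ * ‖w‖ ^ 2 + K * ‖w‖) := by
    intro x hx w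
    have hx₀ : ‖x‖ ≤ ‖x₀‖ + 1 := by
      linarith [norm_le_norm_add_norm_sub' x x₀, mem_ball_iff_norm.1 hx]
    exact (hopfColeWeight_sub_le hψ x w).trans
      (mul_le_mul_of_nonneg_right (exp_le_exp.2 (by gcongr)) (exp_nonneg _))
  refine hasFDerivAt_integral_of_dominated_of_fderiv_le (Metric.ball_mem_nhds x₀ one_pos)
    (bound := fun w => K * (C * exp (-s⁻¹ * ‖w‖ ^ 2 + K * ‖w‖)))
    (.of_forall fun x => (integrable_hopfColeWeight_sub hs hψ x).aestronglyMeasurable)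
    (integrable_hopfColeWeight_sub hs hψ x₀) ?_ (.of_forall fun w x hx => ?_)
    (((integrable_exp_neg_mul_sq_norm_add_mul_norm (inv_pos.2 hs) K).const_mul C).const_mul K)
    (.of_forall fun w x _ => hasFDerivAt_hopfColeWeight_sub hψd w x)
  · exact ((integrable_hopfColeWeight_sub hs hψ x₀).aestronglyMeasurable.smul
      ((measurable_fderiv ℝ ψ).comp (measurable_const.sub measurable_id)).aestronglyMeasurable).neg
  · rw [norm_neg, norm_smul, norm_of_nonneg (hopfColeWeight_pos x _).le, mul_comm]
    exact mul_le_mul (norm_fderiv_le_of_lipschitz ℝ hψ) (hbound x hx w) (exp_nonneg _) K.coe_nonneg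

theorem hasGradientAt_integral_hopfColeWeight (hs : 0 < s) (hψ : LipschitzWith K ψ)
    (hψd : Differentiable ℝ ψ) (x₀ : E) :
    HasGradientAt (fun x => ∫ a, hopfColeWeight s ψ x a)
      (-∫ a, hopfColeWeight s ψ x₀ a • ∇ ψ a) x₀ := by
  rw [hasGradientAt_iff_hasFDerivAt, map_neg, ← LinearIsometryEquiv.coe_toLinearIsometry,
    ← LinearIsometry.integral_comp_comm]
  simpa only [LinearIsometryEquiv.coe_toLinearIsometry, map_smul, gradient,
    LinearIsometryEquiv.apply_symm_apply] using
    hasFDerivAt_integral_hopfColeWeight hs hψ hψd x₀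

theorem hasGradientAt_log_integral_hopfColeWeight (hs : 0 < s) (hψ : LipschitzWith K ψ)
    (hψd : Differentiable ℝ ψ) (x₀ : E) :
    HasGradientAt (fun x => Real.log (∫ a, hopfColeWeight s ψ x a))
      (-∫ a, (hopfColeWeight s ψ x₀ a / ∫ b, hopfColeWeight s ψ x₀ b) • ∇ ψ a) x₀ := by
  convert (hasGradientAt_integral_hopfColeWeight hs hψ hψd x₀).log
    (integral_hopfColeWeight_pos hs hψ x₀).ne' using 1
  rw [smul_neg, ← integral_smul]
  simp only [smul_smul, div_eq_inv_mul]

end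

theorem hopf_cole_eq_constantin_iyer_general (d : ℕ) (ν t : ℝ)
    (hν : 0 < ν) (ht : 0 < t)
    (φ₀ : EuclideanSpace ℝ (Fin d) → ℝ)
    (hφ : ContDiff ℝ 1 φ₀)
    (hgrad : ∃ M, ∀ a, ‖gradient φ₀ a‖ ≤ M)
    (I : EuclideanSpace ℝ (Fin d) → ℝ)
    (hI : ∀ x, I x = ∫ a, Real.exp (-‖x - a‖ ^ 2 / (4 * ν * t) - φ₀ a / (2 * ν)))
    (p : EuclideanSpace ℝ (Fin d) → EuclideanSpace ℝ (Fin d) → ℝ)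
    (hp : ∀ x a, p x a = Real.exp (-‖x - a‖ ^ 2 / (4 * ν * t) - φ₀ a / (2 * ν)) / I x) :
    (∀ x, Integrable (fun a : EuclideanSpace ℝ (Fin d) =>
        Real.exp (-‖x - a‖ ^ 2 / (4 * ν * t) - φ₀ a / (2 * ν))) ∧ 0 < I x) ∧
    Differentiable ℝ I ∧
    (∀ x, (∫ a, p x a) = 1 ∧
      (-(2 * ν)) • gradient (fun y => Real.log (I y)) x = ∫ a, p x a • gradient φ₀ a) := by
  obtain ⟨M, hM⟩ := hgrad
  set ψ := fun a => φ₀ a / (2 * ν)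
  set W := hopfColeWeight (4 * ν * t) ψ
  obtain rfl : I = fun x => ∫ a, W x a := funext hI
  obtain rfl : p = fun x a => W x a / ∫ b, W x b := funext₂ hp
  have hφd : Differentiable ℝ φ₀ := hφ.differentiable one_ne_zero
  have hψd : Differentiable ℝ ψ := by fun_prop
  have hgradψ : ∀ a, ∇ ψ a = (2 * ν)⁻¹ • ∇ φ₀ a :=
    fun a => ((hφd a).hasGradientAt.div_const _).gradient
  have hψ : LipschitzWith ((2 * ν)⁻¹ * M).toNNReal ψ := by
    refine lipschitzWith_of_norm_gradient_le hψd fun a => (Real.le_coe_toNNReal _).trans' ?_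
    rw [hgradψ, norm_smul, Real.norm_of_nonneg (by positivity)]
    exact mul_le_mul_of_nonneg_left (hM a) (by positivity)
  have hs : 0 < 4 * ν * t := by positivity
  refine ⟨fun x => ⟨integrable_hopfColeWeight hs hψ x, integral_hopfColeWeight_pos hs hψ x⟩,
    fun x => (hasGradientAt_integral_hopfColeWeight hs hψ hψd x).differentiableAt,
    fun x => ⟨?_, ?_⟩⟩
  · rw [integral_div, div_self (integral_hopfColeWeight_pos hs hψ x).ne']
  · rw [(hasGradientAt_log_integral_hopfColeWeight hs hψ hψd x).gradient]
    simp_rw [hgradψ, smul_comm _ (2 * ν)⁻¹]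
    rw [integral_smul, neg_smul_neg, smul_smul, mul_inv_cancel₀ (by positivity), one_smul]

/-- Equivalence of the Hopf–Cole formula and the Constantin–Iyer representation for
viscous Burgers with potential initial data `u₀ = ∇φ₀`: with
`I(x) = ∫ exp(−|x−a|²/(4νt) − φ₀(a)/(2ν)) da`, the integrand is integrable with
`I(x) ∈ (0,∞)`, `I` is differentiable, `p_x(a) = exp(−|x−a|²/(4νt) − φ₀(a)/(2ν))/I(x)`
is a probability density, and `−2ν·∇ln I(x) = ∫ ∇φ₀(a)·p_x(a) da`. -/
theorem hopf_cole_eq_constantin_iyer (d : ℕ) (hd : 1 ≤ d) (ν t : ℝ)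
    (hν : 0 < ν) (ht : 0 < t)
    (φ₀ : EuclideanSpace ℝ (Fin d) → ℝ)
    (hφ : ContDiff ℝ 1 φ₀)
    (hgrad : ∃ M, ∀ a, ‖gradient φ₀ a‖ ≤ M)
    (I : EuclideanSpace ℝ (Fin d) → ℝ)
    (hI : ∀ x, I x = ∫ a, Real.exp (-‖x - a‖ ^ 2 / (4 * ν * t) - φ₀ a / (2 * ν)))
    (p : EuclideanSpace ℝ (Fin d) → EuclideanSpace ℝ (Fin d) → ℝ)
    (hp : ∀ x a, p x a = Real.exp (-‖x - a‖ ^ 2 / (4 * ν * t) - φ₀ a / (2 * ν)) / I x) :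
    (∀ x, Integrable (fun a : EuclideanSpace ℝ (Fin d) =>
        Real.exp (-‖x - a‖ ^ 2 / (4 * ν * t) - φ₀ a / (2 * ν))) ∧ 0 < I x) ∧
    Differentiable ℝ I ∧
    (∀ x, (∫ a, p x a) = 1 ∧
      (-(2 * ν)) • gradient (fun y => Real.log (I y)) x = ∫ a, p x a • gradient φ₀ a) :=
  hopf_cole_eq_constantin_iyer_general d ν t hν ht φ₀ hφ hgrad I hI p hp
end

section
/- Let d ≥ 1. For each ν ∈ (0,1] let S_ν: ℝ^d → ℝ be continuous, and let S_*: ℝ^d → ℝ be continuous with S_* ≥ 0 such that S_*(a) = 0 for exactly one point a₀ ∈ ℝ^d. Assume S_ν → S_* uniformly on compact subsets of ℝ^d as ν → 0⁺ and that there exist c, C > 0 with S_ν(a) ≥ c·|a|² − C for all ν ∈ (0,1] and all a ∈ ℝ^d. Then the probability measures μ_ν with density exp(−S_ν(a)/(2ν)) / ∫ exp(−S_ν/(2ν)) converge weakly to the Dirac measure δ_{a₀} as ν → 0⁺. In particular, at a regular point of the limiting inviscid Burgers solution, the backward stochastic Lagrangian trajectory becomes deterministic in the zero-viscosity limit, converging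 to the unique inverse Lagrangian image. -/
/-!
Put `Z_ν = ∫ exp (-S_ν / (2ν))`. Since `S_* (a₀) = 0`, for every `η > 0` and small `ν` we have
`S_ν ≤ η` on a small ball around `a₀`, so `Z_ν ≥ vol(ball) · exp (-η / (2ν))`. Off an open
neighbourhood `U` of `a₀`, compactness and uniqueness of the zero give `S_* ≥ 2m > 0` on a large
closed ball minus `U`, while the quadratic lower bound handles the exterior of that ball; hence
`∫_{Uᶜ} exp (-S_ν / (2ν)) ≤ K · exp (-m / (2ν))`. Taking `η = m / 2`, the normalised weights put
mass `O(exp (-m / (4ν)))` outside `U`, i.e. they concentrate at `a₀`, and averages of a bounded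
function continuous at `a₀` converge to its value there.
-/

open MeasureTheory Filter Topology Metric Set

section WeightedAverage

variable {α : Type*} [MeasurableSpace α] {μ : Measure α}

theorem abs_integral_mul_div_integral_sub_le {φ f : α → ℝ} {u : Set α} {y ε M : ℝ}
    (hφ : Integrable φ μ) (hφ_nonneg : 0 ≤ φ) (hZ : 0 < ∫ x, φ x ∂μ)
    (hf : AEStronglyMeasurable f μ) (hu : MeasurableSet u) (hε : 0 ≤ ε)
    (hfu : ∀ x ∈ u, |f x - y| ≤ ε) (hfM : ∀ x, |f x - y| ≤ M) :
    |(∫ x, f x * φ x ∂μ) / (∫ x, φ x ∂μ) - y| ≤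
      ε + M * ((∫ x in uᶜ, φ x ∂μ) / ∫ x, φ x ∂μ) := by
  have hdev : Integrable (fun x => (f x - y) * φ x) μ :=
    hφ.bdd_mul (hf.sub aestronglyMeasurable_const) (ae_of_all _ fun x => hfM x)
  have hnum : (∫ x, f x * φ x ∂μ) - (∫ x, φ x ∂μ) * y = ∫ x, (f x - y) * φ x ∂μ := by
    have hfφ : Integrable (fun x => f x * φ x) μ :=
      (hdev.add (hφ.mul_const y)).congr (ae_of_all _ fun x => by simp only [Pi.add_apply]; ring)
    rw [← integral_mul_const, ← integral_sub hfφ (hφ.mul_const y)]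
    congr 1 with x
    ring
  have habs : ∀ x, |(f x - y) * φ x| = |f x - y| * φ x := fun x => by
    rw [abs_mul, abs_of_nonneg (hφ_nonneg x)]
  have hdev_abs : Integrable (fun x => |f x - y| * φ x) μ := by
    simpa only [habs] using hdev.abs
  have hbound : |∫ x, (f x - y) * φ x ∂μ| ≤ ε * (∫ x, φ x ∂μ) + M * ∫ x in uᶜ, φ x ∂μ :=
    calc |∫ x, (f x - y) * φ x ∂μ|
        ≤ ∫ x, |f x - y| * φ x ∂μ := by
          simpa only [habs] using
            abs_integral_le_integral_abs (μ := μ) (f := fun x => (f x - y) * φ x)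
      _ = (∫ x in u, |f x - y| * φ x ∂μ) + ∫ x in uᶜ, |f x - y| * φ x ∂μ :=
          (integral_add_compl hu hdev_abs).symm
      _ ≤ (∫ x in u, ε * φ x ∂μ) + ∫ x in uᶜ, M * φ x ∂μ := by
          refine add_le_add ?_ ?_
          · exact setIntegral_mono_on hdev_abs.integrableOn (hφ.const_mul ε).integrableOn hu
              fun x hx => mul_le_mul_of_nonneg_right (hfu x hx) (hφ_nonneg x)
          · exact setIntegral_mono_on hdev_abs.integrableOn (hφ.const_mul M).integrableOn
              hu.compl fun x _ => mul_le_mul_of_nonneg_right (hfM x) (hφ_nonneg x)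
      _ ≤ ε * (∫ x, φ x ∂μ) + M * ∫ x in uᶜ, φ x ∂μ := by
          rw [integral_const_mul, integral_const_mul]
          exact add_le_add_left
            (mul_le_mul_of_nonneg_left (setIntegral_le_integral hφ (ae_of_all _ hφ_nonneg)) hε) _
  rw [div_sub' hZ.ne', abs_div, abs_of_pos hZ, hnum, div_le_iff₀ hZ]
  calc _ ≤ ε * (∫ x, φ x ∂μ) + M * ∫ x in uᶜ, φ x ∂μ := hbound
    _ = (ε + M * ((∫ x in uᶜ, φ x ∂μ) / ∫ x, φ x ∂μ)) * ∫ x, φ x ∂μ := by field_simp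

variable [TopologicalSpace α] [OpensMeasurableSpace α] {ι : Type*} {l : Filter ι}

theorem tendsto_integral_mul_div_integral_of_concentrates {φ : ι → α → ℝ} {f : α → ℝ} {x₀ : α}
    {M : ℝ} (hφ : ∀ᶠ i in l, Integrable (φ i) μ ∧ 0 ≤ φ i ∧ 0 < ∫ x, φ i x ∂μ)
    (hconc : ∀ u, IsOpen u → x₀ ∈ u →
      Tendsto (fun i => (∫ x in uᶜ, φ i x ∂μ) / ∫ x, φ i x ∂μ) l (𝓝 0))
    (hf : AEStronglyMeasurable f μ) (hfM : ∀ x, |f x| ≤ M) (hfx₀ : ContinuousAt f x₀) :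
    Tendsto (fun i => (∫ x, f x * φ i x ∂μ) / ∫ x, φ i x ∂μ) l (𝓝 (f x₀)) := by
  rw [Metric.tendsto_nhds]
  intro ε hε
  obtain ⟨u, hfu, hu, hx₀u⟩ :=
    eventually_nhds_iff.1 (Metric.continuousAt_iff'.1 hfx₀ (ε / 2) (half_pos hε))
  have hlim : Tendsto (fun i => ε / 2 + 2 * M * ((∫ x in uᶜ, φ i x ∂μ) / ∫ x, φ i x ∂μ)) l
      (𝓝 (ε / 2)) := by
    simpa using ((hconc u hu hx₀u).const_mul (2 * M)).const_add (ε / 2)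
  filter_upwards [hφ, hlim.eventually (gt_mem_nhds (half_lt_self hε))] with i ⟨hint, hnn, hZ⟩ hi
  refine lt_of_le_of_lt ?_ hi
  rw [Real.dist_eq]
  refine abs_integral_mul_div_integral_sub_le hint hnn hZ hf hu.measurableSet (half_pos hε).le
    (fun x hx => (hfu x hx).le) fun x => ?_
  calc |f x - f x₀| ≤ |f x| + |f x₀| := abs_sub _ _
    _ ≤ 2 * M := by linarith [hfM x, hfM x₀]

end WeightedAverage

section GibbsIntegrals

variable {α : Type*} [MeasurableSpace α] {μ : Measure α}

theorem exp_neg_div_le_exp_mul_exp {s m w t : ℝ} (ht : 0 < t) (h : m + t * w ≤ s) :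
    Real.exp (-s / t) ≤ Real.exp (-m / t) * Real.exp (-w) := by
  rw [← Real.exp_add, Real.exp_le_exp, show -m / t + -w = -(m + t * w) / t by field_simp; ring]
  exact div_le_div_of_nonneg_right (neg_le_neg h) ht.le

theorem integrable_exp_neg_div_of_le {S w : α → ℝ} {t m : ℝ} (ht : 0 < t)
    (hS : AEStronglyMeasurable S μ) (hw : Integrable (fun a => Real.exp (-w a)) μ)
    (hSw : ∀ a, m + t * w a ≤ S a) :
    Integrable (fun a => Real.exp (-S a / t)) μ :=
  (hw.const_mul (Real.exp (-m / t))).mono' (by fun_prop) (ae_of_all _ fun a => by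
    rw [Real.norm_of_nonneg (Real.exp_pos _).le]
    exact exp_neg_div_le_exp_mul_exp ht (hSw a))

theorem exp_neg_div_mul_measureReal_le_integral_exp {S : α → ℝ} {t s : ℝ} {B : Set α}
    (ht : 0 ≤ t) (hB : MeasurableSet B) (hBμ : μ B ≠ ⊤)
    (hint : Integrable (fun a => Real.exp (-S a / t)) μ) (hS : ∀ a ∈ B, S a ≤ s) :
    Real.exp (-s / t) * μ.real B ≤ ∫ a, Real.exp (-S a / t) ∂μ :=
  (setIntegral_ge_of_const_le_real hB hBμ
      (fun a ha => Real.exp_le_exp.2 (div_le_div_of_nonneg_right (neg_le_neg (hS a ha)) ht))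
      hint.integrableOn).trans
    (setIntegral_le_integral hint (ae_of_all _ fun _ => (Real.exp_pos _).le))

theorem setIntegral_exp_neg_div_le {S w : α → ℝ} {t m : ℝ} {T : Set α} (ht : 0 < t)
    (hT : MeasurableSet T) (hw : Integrable (fun a => Real.exp (-w a)) μ)
    (hSw : ∀ a ∈ T, m + t * w a ≤ S a) :
    ∫ a in T, Real.exp (-S a / t) ∂μ ≤ Real.exp (-m / t) * ∫ a, Real.exp (-w a) ∂μ := by
  rw [← integral_const_mul]
  calc ∫ a in T, Real.exp (-S a / t) ∂μ
      ≤ ∫ a in T, Real.exp (-m / t) * Real.exp (-w a) ∂μ :=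
        integral_mono_of_nonneg (ae_of_all _ fun _ => (Real.exp_pos _).le)
          (hw.const_mul _).integrableOn
          (ae_restrict_of_forall_mem hT fun a ha => exp_neg_div_le_exp_mul_exp ht (hSw a ha))
    _ ≤ ∫ a, Real.exp (-m / t) * Real.exp (-w a) ∂μ :=
        setIntegral_le_integral (hw.const_mul _) (ae_of_all _ fun _ => by positivity)

theorem setIntegral_exp_div_integral_exp_le {S w : α → ℝ} {t m s : ℝ} {B T : Set α} (ht : 0 < t)
    (hB : MeasurableSet B) (hBμ : μ B ≠ ⊤) (hBpos : 0 < μ.real B) (hT : MeasurableSet T)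
    (hint : Integrable (fun a => Real.exp (-S a / t)) μ)
    (hw : Integrable (fun a => Real.exp (-w a)) μ)
    (hSB : ∀ a ∈ B, S a ≤ s) (hST : ∀ a ∈ T, m + t * w a ≤ S a) :
    (∫ a in T, Real.exp (-S a / t) ∂μ) / ∫ a, Real.exp (-S a / t) ∂μ ≤
      (∫ a, Real.exp (-w a) ∂μ) / μ.real B * Real.exp (-(m - s) / t) := by
  have hZ := exp_neg_div_mul_measureReal_le_integral_exp ht.le hB hBμ hint hSB
  have hG : 0 ≤ ∫ a, Real.exp (-w a) ∂μ := integral_nonneg fun _ => (Real.exp_pos _).le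
  have hexp : Real.exp (-(m - s) / t) * Real.exp (-s / t) = Real.exp (-m / t) := by
    rw [← Real.exp_add]; ring_nf
  rw [div_le_iff₀ ((mul_pos (Real.exp_pos _) hBpos).trans_le hZ)]
  calc ∫ a in T, Real.exp (-S a / t) ∂μ
      ≤ Real.exp (-m / t) * ∫ a, Real.exp (-w a) ∂μ := setIntegral_exp_neg_div_le ht hT hw hST
    _ = (∫ a, Real.exp (-w a) ∂μ) / μ.real B * Real.exp (-(m - s) / t) *
          (Real.exp (-s / t) * μ.real B) := by
        rw [← hexp]; field_simp
    _ ≤ _ := mul_le_mul_of_nonneg_left hZ (by positivity)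

end GibbsIntegrals

theorem tendsto_exp_neg_div_mul_nhdsGT_zero {a b : ℝ} (ha : 0 < a) (hb : 0 < b) :
    Tendsto (fun ν => Real.exp (-a / (b * ν))) (𝓝[>] 0) (𝓝 0) := by
  have h : Tendsto (fun ν : ℝ => a / b * ν⁻¹) (𝓝[>] 0) atTop :=
    tendsto_inv_nhdsGT_zero.const_mul_atTop (div_pos ha hb)
  refine (Real.tendsto_exp_neg_atTop_nhds_zero.comp h).congr fun ν => ?_
  simp only [Function.comp_apply]
  ring_nf

theorem integrable_exp_neg_mul_norm_sq_add {V : Type*} [NormedAddCommGroup V]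
    [InnerProductSpace ℝ V] [FiniteDimensional ℝ V] [MeasurableSpace V] [BorelSpace V]
    {b : ℝ} (hb : 0 < b) (k : ℝ) :
    Integrable (fun v : V => Real.exp (-(b * ‖v‖ ^ 2 + k))) := by
  have h := (GaussianFourier.integrable_cexp_neg_mul_sq_norm_add (V := V) (b := (b : ℂ))
    (by simpa using hb) 0 0).norm.const_mul (Real.exp (-k))
  refine h.congr (ae_of_all _ fun v => ?_)
  simp only [Complex.norm_exp, zero_mul, add_zero, neg_add, Real.exp_add]
  simp [← Complex.ofReal_pow, mul_comm]

theorem exists_eventually_lt_on_ball_of_tendstoUniformlyOn {X ι : Type*} [PseudoMetricSpace X]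
    [ProperSpace X] {l : Filter ι} {F : ι → X → ℝ} {f : X → ℝ} {x₀ : X}
    (hunif : ∀ K, IsCompact K → TendstoUniformlyOn F f l K) (hf : ContinuousAt f x₀)
    {η : ℝ} (hη : 0 < η) :
    ∃ r > 0, ∀ᶠ i in l, ∀ x ∈ ball x₀ r, F i x < f x₀ + η := by
  obtain ⟨r, hr, hfr⟩ := Metric.continuousAt_iff.1 hf (η / 2) (half_pos hη)
  refine ⟨r, hr, ?_⟩
  filter_upwards [Metric.tendstoUniformlyOn_iff.1 (hunif _ (isCompact_closedBall x₀ r)) (η / 2)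
    (half_pos hη)] with i hi x hx
  have h₁ := hi x (ball_subset_closedBall hx)
  have h₂ := hfr (mem_ball.1 hx)
  rw [Real.dist_eq, abs_lt] at h₁ h₂
  linarith

section LaplaceMethod

variable {V : Type*} [NormedAddCommGroup V] [InnerProductSpace ℝ V] [FiniteDimensional ℝ V]
  {S : ℝ → V → ℝ} {Sstar : V → ℝ} {a₀ : V} {c C : ℝ}

theorem exists_eventually_add_mul_le_on_compl (hSstar : Continuous Sstar)
    (hSstar_pos : ∀ a ≠ a₀, 0 < Sstar a)
    (hunif : ∀ K, IsCompact K → TendstoUniformlyOn S Sstar (𝓝[>] 0) K) (hc : 0 < c)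
    (hgrowth : ∀ ν ∈ Ioc (0 : ℝ) 1, ∀ a, c * ‖a‖ ^ 2 - C ≤ S ν a)
    {u : Set V} (hu : IsOpen u) (ha₀ : a₀ ∈ u) :
    ∃ m > 0, ∃ k, ∀ᶠ ν in 𝓝[>] 0, ∀ a ∈ uᶜ, m + 2 * ν * (c / 4 * ‖a‖ ^ 2 + k) ≤ S ν a := by
  obtain ⟨R, hCR, hR⟩ : ∃ R, C + 1 ≤ c * R ^ 2 ∧ 0 ≤ R :=
    ((((tendsto_pow_atTop two_ne_zero).const_mul_atTop hc).eventually_ge_atTop (C + 1)).and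
      (eventually_ge_atTop 0)).exists
  have hK : IsCompact (closedBall (0 : V) R ∩ uᶜ) :=
    (isCompact_closedBall 0 R).inter_right hu.isClosed_compl
  obtain ⟨m₀, hm₀, hm₀K⟩ := hK.exists_forall_le' hSstar.continuousOn
    fun a ha => hSstar_pos a fun h => ha.2 (h ▸ ha₀)
  refine ⟨min (m₀ / 2) 1, by positivity, -(c / 4 * R ^ 2), ?_⟩
  filter_upwards [Ioc_mem_nhdsGT one_pos, Metric.tendstoUniformlyOn_iff.1
    (hunif _ (isCompact_closedBall (0 : V) R)) (m₀ / 2) (half_pos hm₀)] with ν hν hclose a ha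
  have hmin₁ := min_le_left (m₀ / 2) 1
  have hmin₂ := min_le_right (m₀ / 2) 1
  by_cases haR : ‖a‖ ≤ R
  · have haK : a ∈ closedBall (0 : V) R := mem_closedBall_zero_iff.2 haR
    have hdist := hclose a haK
    rw [Real.dist_eq, abs_lt] at hdist
    have hm₀a := hm₀K a ⟨haK, ha⟩
    have hsq : ‖a‖ ^ 2 ≤ R ^ 2 := pow_le_pow_left₀ (norm_nonneg a) haR 2
    have hmargin : 2 * ν * (c / 4 * ‖a‖ ^ 2 + -(c / 4 * R ^ 2)) ≤ 0 :=
      mul_nonpos_of_nonneg_of_nonpos (by linarith [hν.1]) (by nlinarith)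
    linarith
  · have hsq : R ^ 2 ≤ ‖a‖ ^ 2 := pow_le_pow_left₀ hR (le_of_not_ge haR) 2
    have hmargin : 2 * ν * (c / 4 * (‖a‖ ^ 2 - R ^ 2)) ≤ 2 * (c / 4 * (‖a‖ ^ 2 - R ^ 2)) :=
      mul_le_mul_of_nonneg_right (by linarith [hν.2]) (by nlinarith)
    nlinarith [hgrowth ν hν a]

variable [MeasurableSpace V] [BorelSpace V]

theorem integrable_exp_neg_div_of_quadratic_le {F : V → ℝ} {t : ℝ} (hc : 0 < c) (ht : 0 < t)
    (hF : Continuous F) (hFc : ∀ a, c * ‖a‖ ^ 2 - C ≤ F a) :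
    Integrable (fun a => Real.exp (-F a / t)) :=
  integrable_exp_neg_div_of_le (m := -C) ht hF.aestronglyMeasurable
    (integrable_exp_neg_mul_norm_sq_add (div_pos hc ht) 0) fun a => by
      convert hFc a using 1
      field_simp
      ring

theorem tendsto_setIntegral_compl_exp_div_integral_exp
    (hScont : ∀ ν ∈ Ioc (0 : ℝ) 1, Continuous (S ν)) (hSstar : Continuous Sstar)
    (hSstar_pos : ∀ a ≠ a₀, 0 < Sstar a) (hSstar_a₀ : Sstar a₀ = 0)
    (hunif : ∀ K, IsCompact K → TendstoUniformlyOn S Sstar (𝓝[>] 0) K) (hc : 0 < c)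
    (hgrowth : ∀ ν ∈ Ioc (0 : ℝ) 1, ∀ a, c * ‖a‖ ^ 2 - C ≤ S ν a)
    {u : Set V} (hu : IsOpen u) (ha₀ : a₀ ∈ u) :
    Tendsto (fun ν => (∫ a in uᶜ, Real.exp (-S ν a / (2 * ν))) /
      ∫ a, Real.exp (-S ν a / (2 * ν))) (𝓝[>] 0) (𝓝 0) := by
  obtain ⟨m, hm, k, hfar⟩ :=
    exists_eventually_add_mul_le_on_compl hSstar hSstar_pos hunif hc hgrowth hu ha₀
  obtain ⟨r, hr, hnear⟩ := exists_eventually_lt_on_ball_of_tendstoUniformlyOn hunif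
    hSstar.continuousAt (half_pos hm)
  have hball : 0 < volume.real (ball a₀ r) :=
    ENNReal.toReal_pos (measure_ball_pos volume a₀ hr).ne' measure_ball_lt_top.ne
  have hbound : Tendsto (fun ν => (∫ a : V, Real.exp (-(c / 4 * ‖a‖ ^ 2 + k))) /
      volume.real (ball a₀ r) * Real.exp (-(m - m / 2) / (2 * ν))) (𝓝[>] 0) (𝓝 0) := by
    simpa only [mul_zero] using
      (tendsto_exp_neg_div_mul_nhdsGT_zero (sub_pos.2 (half_lt_self hm)) two_pos).const_mul
      ((∫ a : V, Real.exp (-(c / 4 * ‖a‖ ^ 2 + k))) / volume.real (ball a₀ r))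
  refine squeeze_zero' (Eventually.of_forall fun ν => by positivity) ?_ hbound
  filter_upwards [Ioc_mem_nhdsGT one_pos, hfar, hnear] with ν hν hfar hnear
  exact setIntegral_exp_div_integral_exp_le (by linarith [hν.1]) measurableSet_ball
    measure_ball_lt_top.ne hball hu.measurableSet.compl
    (integrable_exp_neg_div_of_quadratic_le hc (by linarith [hν.1]) (hScont ν hν) (hgrowth ν hν))
    (integrable_exp_neg_mul_norm_sq_add (by positivity) k)
    (fun a ha => by linarith [hnear a ha]) hfar

end LaplaceMethod

theorem laplace_convergence_to_dirac_general (d : ℕ)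
    (S : ℝ → EuclideanSpace ℝ (Fin d) → ℝ)
    (Sstar : EuclideanSpace ℝ (Fin d) → ℝ)
    (a₀ : EuclideanSpace ℝ (Fin d))
    (hScont : ∀ ν ∈ Set.Ioc (0 : ℝ) 1, Continuous (S ν))
    (hSstarCont : Continuous Sstar)
    (hSstarNonneg : ∀ a, 0 ≤ Sstar a)
    (hzero : ∀ a, Sstar a = 0 ↔ a = a₀)
    (hunif : ∀ K : Set (EuclideanSpace ℝ (Fin d)), IsCompact K →
      TendstoUniformlyOn S Sstar (nhdsWithin 0 (Set.Ioi 0)) K)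
    (c C : ℝ) (hc : 0 < c)
    (hgrowth : ∀ ν ∈ Set.Ioc (0 : ℝ) 1, ∀ a, c * ‖a‖ ^ 2 - C ≤ S ν a) :
    ∀ f : EuclideanSpace ℝ (Fin d) → ℝ, Continuous f → (∃ M, ∀ a, |f a| ≤ M) →
      Tendsto (fun ν : ℝ =>
          (∫ a, f a * Real.exp (-S ν a / (2 * ν))) / ∫ a, Real.exp (-S ν a / (2 * ν)))
        (nhdsWithin 0 (Set.Ioi 0)) (nhds (f a₀)) := by
  rintro f hf ⟨M, hM⟩
  have hSstar_pos : ∀ a ≠ a₀, 0 < Sstar a := fun a ha =>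
    (hSstarNonneg a).lt_of_ne fun h => ha ((hzero a).1 h.symm)
  have hdensity : ∀ᶠ ν in 𝓝[>] 0, Integrable (fun a => Real.exp (-S ν a / (2 * ν))) ∧
      0 ≤ (fun a => Real.exp (-S ν a / (2 * ν))) ∧ 0 < ∫ a, Real.exp (-S ν a / (2 * ν)) := by
    filter_upwards [Ioc_mem_nhdsGT one_pos] with ν hν
    have hint := integrable_exp_neg_div_of_quadratic_le hc (by linarith [hν.1] : (0 : ℝ) < 2 * ν)
      (hScont ν hν) (hgrowth ν hν)
    exact ⟨hint, fun a => (Real.exp_pos _).le, integral_exp_pos hint⟩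
  exact tendsto_integral_mul_div_integral_of_concentrates hdensity
    (fun u hu ha₀ => tendsto_setIntegral_compl_exp_div_integral_exp hScont hSstarCont hSstar_pos
      ((hzero a₀).2 rfl) hunif hc hgrowth hu ha₀)
    hf.aestronglyMeasurable hM hf.continuousAt

/-- Zero-viscosity determinism at a regular point: if `S_ν → S_*` uniformly on compacts,
`S_* ≥ 0` continuous with unique zero `a₀`, and `S_ν(a) ≥ c·|a|² − C` uniformly, then the
probability measures with densities proportional to `exp(−S_ν/(2ν))` converge weakly to
the Dirac measure `δ_{a₀}` as `ν → 0⁺`: for every bounded continuous `f`, the normalized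
integrals converge to `f(a₀)`. -/
theorem laplace_convergence_to_dirac (d : ℕ) (hd : 1 ≤ d)
    (S : ℝ → EuclideanSpace ℝ (Fin d) → ℝ)
    (Sstar : EuclideanSpace ℝ (Fin d) → ℝ)
    (a₀ : EuclideanSpace ℝ (Fin d))
    (hScont : ∀ ν ∈ Set.Ioc (0 : ℝ) 1, Continuous (S ν))
    (hSstarCont : Continuous Sstar)
    (hSstarNonneg : ∀ a, 0 ≤ Sstar a)
    (hzero : ∀ a, Sstar a = 0 ↔ a = a₀)
    (hunif : ∀ K : Set (EuclideanSpace ℝ (Fin d)), IsCompact K →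
      TendstoUniformlyOn S Sstar (nhdsWithin 0 (Set.Ioi 0)) K)
    (c C : ℝ) (hc : 0 < c) (hC : 0 < C)
    (hgrowth : ∀ ν ∈ Set.Ioc (0 : ℝ) 1, ∀ a, c * ‖a‖ ^ 2 - C ≤ S ν a) :
    ∀ f : EuclideanSpace ℝ (Fin d) → ℝ, Continuous f → (∃ M, ∀ a, |f a| ≤ M) →
      Tendsto (fun ν : ℝ =>
          (∫ a, f a * Real.exp (-S ν a / (2 * ν))) / ∫ a, Real.exp (-S ν a / (2 * ν)))
        (nhdsWithin 0 (Set.Ioi 0)) (nhds (f a₀)) :=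
  laplace_convergence_to_dirac_general d S Sstar a₀ hScont hSstarCont hSstarNonneg hzero hunif c C
    hc hgrowth
end

section
/- Let u₀: ℝ → ℝ be continuously differentiable, let I ⊆ (0, ∞) be an open interval, and let a₋, a₊, x_*: I → ℝ be differentiable functions satisfying, for all t ∈ I: x_*(t) = a₋(t) + t·u₀(a₋(t)) = a₊(t) + t·u₀(a₊(t)), x_*'(t) = ½( u₀(a₋(t)) + u₀(a₊(t)) ), and 1 + t·u₀'(a_±(t)) ≠ 0. Set u_±(t) := u₀(a_±(t)) and u'_±(t) := u₀'(a_±(t)) / (1 + t·u₀'(a_±(t))). Then a_±'(t) = ±½·(u₋(t) − u₊(t)) / (1 + t·u₀'(a_±(t))), x_* is twice differentiable on I, and the shock acceleration is x_*''(t) = −¼·( u₋(t) − u₊(t) )·( u'₋(t) − u'₊(t) ). -/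
/-! Differentiating the endpoint relation `x_* = a + t·u₀(a)` gives
`x_*' = u₀(a) + (1 + t·u₀'(a))·a'`; equating this with the Rankine–Hugoniot velocity solves for
`a_±'`. Since `x_*' = ½(u₀(a₋) + u₀(a₊))` holds on a neighbourhood, the chain rule differentiates it
once more, and substituting `a_±'` gives the acceleration. -/

open Filter Topology

theorem hasDerivAt_add_mul_comp {u₀ a : ℝ → ℝ} {a' t : ℝ}
    (hu₀ : DifferentiableAt ℝ u₀ (a t)) (ha : HasDerivAt a a' t) :
    HasDerivAt (fun s => a s + s * u₀ (a s)) (u₀ (a t) + (1 + t * deriv u₀ (a t)) * a') t :=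
  (ha.add ((hasDerivAt_id' t).mul (hu₀.hasDerivAt.comp t ha))).congr_deriv <| by
    simp only [Function.comp_apply]
    ring

theorem deriv_eq_of_eventuallyEq_add_mul_comp {u₀ a x : ℝ → ℝ} {t : ℝ}
    (hu₀ : DifferentiableAt ℝ u₀ (a t)) (ha : DifferentiableAt ℝ a t)
    (hx : x =ᶠ[𝓝 t] fun s => a s + s * u₀ (a s)) (hne : 1 + t * deriv u₀ (a t) ≠ 0) :
    deriv a t = (deriv x t - u₀ (a t)) / (1 + t * deriv u₀ (a t)) := by
  rw [hx.deriv_eq, (hasDerivAt_add_mul_comp hu₀ ha.hasDerivAt).deriv]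
  field_simp
  ring

theorem burgers_shock_kinematics_general (u₀ : ℝ → ℝ) (t₁ t₂ : ℝ) (xs am ap : ℝ → ℝ)
    (hu₀ : ContDiff ℝ 1 u₀)
    (hdam : ∀ t ∈ Set.Ioo t₁ t₂, DifferentiableAt ℝ am t)
    (hdap : ∀ t ∈ Set.Ioo t₁ t₂, DifferentiableAt ℝ ap t)
    (hend_m : ∀ t ∈ Set.Ioo t₁ t₂, xs t = am t + t * u₀ (am t))
    (hend_p : ∀ t ∈ Set.Ioo t₁ t₂, xs t = ap t + t * u₀ (ap t))
    (hrh : ∀ t ∈ Set.Ioo t₁ t₂, deriv xs t = (1 / 2) * (u₀ (am t) + u₀ (ap t)))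
    (hne_m : ∀ t ∈ Set.Ioo t₁ t₂, 1 + t * deriv u₀ (am t) ≠ 0)
    (hne_p : ∀ t ∈ Set.Ioo t₁ t₂, 1 + t * deriv u₀ (ap t) ≠ 0) :
    ∀ t ∈ Set.Ioo t₁ t₂,
      deriv ap t = (1 / 2) * (u₀ (am t) - u₀ (ap t)) / (1 + t * deriv u₀ (ap t)) ∧
      deriv am t = -((1 / 2) * (u₀ (am t) - u₀ (ap t)) / (1 + t * deriv u₀ (am t))) ∧
      DifferentiableAt ℝ (deriv xs) t ∧
      deriv (deriv xs) t
        = -(1 / 4) * (u₀ (am t) - u₀ (ap t))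
          * (deriv u₀ (am t) / (1 + t * deriv u₀ (am t))
             - deriv u₀ (ap t) / (1 + t * deriv u₀ (ap t))) := by
  intro t ht
  have hu₀' : Differentiable ℝ u₀ := hu₀.differentiable one_ne_zero
  have hnhds : Set.Ioo t₁ t₂ ∈ 𝓝 t := isOpen_Ioo.mem_nhds ht
  have hap : deriv ap t = (1 / 2) * (u₀ (am t) - u₀ (ap t)) / (1 + t * deriv u₀ (ap t)) := by
    rw [deriv_eq_of_eventuallyEq_add_mul_comp (hu₀' _) (hdap t ht)
      (eventuallyEq_of_mem hnhds hend_p) (hne_p t ht), hrh t ht]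
    ring
  have ham : deriv am t = -((1 / 2) * (u₀ (am t) - u₀ (ap t)) / (1 + t * deriv u₀ (am t))) := by
    rw [deriv_eq_of_eventuallyEq_add_mul_comp (hu₀' _) (hdam t ht)
      (eventuallyEq_of_mem hnhds hend_m) (hne_m t ht), hrh t ht]
    ring
  have hum := (hu₀' (am t)).hasDerivAt.comp t (hdam t ht).hasDerivAt
  have hup := (hu₀' (ap t)).hasDerivAt.comp t (hdap t ht).hasDerivAt
  have hacc : HasDerivAt (deriv xs)
      ((1 / 2) * (deriv u₀ (am t) * deriv am t + deriv u₀ (ap t) * deriv ap t)) t :=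
    ((hum.add hup).const_mul (1 / 2)).congr_of_eventuallyEq (eventuallyEq_of_mem hnhds hrh)
  refine ⟨hap, ham, hacc.differentiableAt, ?_⟩
  rw [hacc.deriv, ham, hap]
  ring

/-- Shock kinematics for an inviscid Burgers entropy solution: from the endpoint relations
`x_*(t) = a_±(t) + t·u₀(a_±(t))`, the Rankine–Hugoniot velocity
`x_*'(t) = ½(u₋ + u₊)`, and nondegeneracy `1 + t·u₀'(a_±(t)) ≠ 0`, one deduces
`a_±'(t) = ±½(u₋ − u₊)/(1 + t·u₀'(a_±(t)))`, twice differentiability of `x_*`, and the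
shock acceleration `x_*''(t) = −¼(u₋ − u₊)(u'₋ − u'₊)` with
`u'_± = u₀'(a_±)/(1 + t·u₀'(a_±))`. -/
theorem burgers_shock_kinematics (u₀ : ℝ → ℝ) (t₁ t₂ : ℝ) (xs am ap : ℝ → ℝ)
    (hI : Set.Ioo t₁ t₂ ⊆ Set.Ioi (0 : ℝ))
    (hu₀ : ContDiff ℝ 1 u₀)
    (hdx : ∀ t ∈ Set.Ioo t₁ t₂, DifferentiableAt ℝ xs t)
    (hdam : ∀ t ∈ Set.Ioo t₁ t₂, DifferentiableAt ℝ am t)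
    (hdap : ∀ t ∈ Set.Ioo t₁ t₂, DifferentiableAt ℝ ap t)
    (hend_m : ∀ t ∈ Set.Ioo t₁ t₂, xs t = am t + t * u₀ (am t))
    (hend_p : ∀ t ∈ Set.Ioo t₁ t₂, xs t = ap t + t * u₀ (ap t))
    (hrh : ∀ t ∈ Set.Ioo t₁ t₂, deriv xs t = (1 / 2) * (u₀ (am t) + u₀ (ap t)))
    (hne_m : ∀ t ∈ Set.Ioo t₁ t₂, 1 + t * deriv u₀ (am t) ≠ 0)
    (hne_p : ∀ t ∈ Set.Ioo t₁ t₂, 1 + t * deriv u₀ (ap t) ≠ 0) :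
    ∀ t ∈ Set.Ioo t₁ t₂,
      deriv ap t = (1 / 2) * (u₀ (am t) - u₀ (ap t)) / (1 + t * deriv u₀ (ap t)) ∧
      deriv am t = -((1 / 2) * (u₀ (am t) - u₀ (ap t)) / (1 + t * deriv u₀ (am t))) ∧
      DifferentiableAt ℝ (deriv xs) t ∧
      deriv (deriv xs) t
        = -(1 / 4) * (u₀ (am t) - u₀ (ap t))
          * (deriv u₀ (am t) / (1 + t * deriv u₀ (am t))
             - deriv u₀ (ap t) / (1 + t * deriv u₀ (ap t))) :=
  burgers_shock_kinematics_general u₀ t₁ t₂ xs am ap hu₀ hdam hdap hend_m hend_p hrh hne_m hne_p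
end

section
/- Let u₀: ℝ → ℝ be continuously differentiable, let ρ₀: ℝ → ℝ be continuous, let I ⊆ (0, ∞) be an open interval, and let a₋, a₊, x_*: I → ℝ be differentiable functions satisfying, for all t ∈ I: a₋(t) < a₊(t), x_*(t) = a₋(t) + t·u₀(a₋(t)) = a₊(t) + t·u₀(a₊(t)), x_*'(t) = ½( u₀(a₋(t)) + u₀(a₊(t)) ), and 1 + t·u₀'(a_±(t)) > 0. Define the absorbed mass M(t) := ∫_{a₋(t)}^{a₊(t)} ρ₀(a) da, the one-sided velocities u_±(t) := u₀(a_±(t)), and the one-sided densities ρ_±(t) := ρ₀(a_±(t)) / (1 + t·u₀'(a_±(t))). Then M is differentiable on I with M'(t) = ½·( u₋(t) − u₊(t) )·( ρ₋(t) + ρ₊(t) ). In particular, if ρ₀ ≥ 0 and u₋(t) > u₊(t) (the entropy condition), then M'(t) ≥ 0: the mass carried by the shock is nondecreasing in time. -/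
/-!
Differentiating the endpoint relation `x_* = a_± + t u₀(a_±)` gives
`(1 + t u₀'(a_±)) a_±' = x_*' - u₀(a_±)`, which by Rankine–Hugoniot equals `±½(u₋ - u₊)`.
The Leibniz rule `M' = ρ₀(a₊) a₊' - ρ₀(a₋) a₋'` then yields the formula for `M'`.
-/

open Filter Topology

theorem Continuous.hasDerivAt_integral_comp_endpoints {E : Type*} [NormedAddCommGroup E]
    [NormedSpace ℝ E] [CompleteSpace E] {f : ℝ → E} (hf : Continuous f) {a b : ℝ → ℝ}
    {a' b' t : ℝ} (ha : HasDerivAt a a' t) (hb : HasDerivAt b b' t) :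
    HasDerivAt (fun τ => ∫ x in a τ..b τ, f x) (b' • f (b t) - a' • f (a t)) t := by
  have hF := (intervalIntegral.integral_hasStrictFDerivAt (hf.intervalIntegrable (a t) (b t))
    (hf.stronglyMeasurableAtFilter _ _) (hf.stronglyMeasurableAtFilter _ _) hf.continuousAt
    hf.continuousAt).hasFDerivAt
  simpa [Function.comp_def] using hF.comp_hasDerivAt t (ha.prodMk hb)

theorem hasDerivAt_of_eventuallyEq_characteristic {u₀ xs a : ℝ → ℝ} {t : ℝ}
    (hu : DifferentiableAt ℝ u₀ (a t)) (ha : DifferentiableAt ℝ a t)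
    (hx : ∀ᶠ τ in 𝓝 t, xs τ = a τ + τ * u₀ (a τ)) (hD : 1 + t * deriv u₀ (a t) ≠ 0) :
    HasDerivAt a ((deriv xs t - u₀ (a t)) / (1 + t * deriv u₀ (a t))) t := by
  have hchar := ha.hasDerivAt.add ((hasDerivAt_id t).mul (hu.hasDerivAt.comp t ha.hasDerivAt))
  rw [(hchar.congr_of_eventuallyEq hx).deriv]
  refine ha.hasDerivAt.congr_deriv ?_
  simp only [id, Function.comp_apply]
  field_simp
  ring

theorem shock_mass_nondecreasing_general (u₀ ρ₀ : ℝ → ℝ) (t₁ t₂ : ℝ) (xs am ap : ℝ → ℝ)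
    (hu₀ : ContDiff ℝ 1 u₀) (hρ₀ : Continuous ρ₀)
    (hdam : ∀ t ∈ Set.Ioo t₁ t₂, DifferentiableAt ℝ am t)
    (hdap : ∀ t ∈ Set.Ioo t₁ t₂, DifferentiableAt ℝ ap t)
    (hend_m : ∀ t ∈ Set.Ioo t₁ t₂, xs t = am t + t * u₀ (am t))
    (hend_p : ∀ t ∈ Set.Ioo t₁ t₂, xs t = ap t + t * u₀ (ap t))
    (hrh : ∀ t ∈ Set.Ioo t₁ t₂, deriv xs t = (1 / 2) * (u₀ (am t) + u₀ (ap t)))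
    (hpos_m : ∀ t ∈ Set.Ioo t₁ t₂, 0 < 1 + t * deriv u₀ (am t))
    (hpos_p : ∀ t ∈ Set.Ioo t₁ t₂, 0 < 1 + t * deriv u₀ (ap t)) :
    (∀ t ∈ Set.Ioo t₁ t₂,
      HasDerivAt (fun τ => ∫ a in (am τ)..(ap τ), ρ₀ a)
        ((1 / 2) * (u₀ (am t) - u₀ (ap t))
          * (ρ₀ (am t) / (1 + t * deriv u₀ (am t))
             + ρ₀ (ap t) / (1 + t * deriv u₀ (ap t)))) t) ∧
    ((∀ a, 0 ≤ ρ₀ a) → ∀ t ∈ Set.Ioo t₁ t₂, u₀ (ap t) < u₀ (am t) →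
      0 ≤ (1 / 2) * (u₀ (am t) - u₀ (ap t))
          * (ρ₀ (am t) / (1 + t * deriv u₀ (am t))
             + ρ₀ (ap t) / (1 + t * deriv u₀ (ap t)))) := by
  refine ⟨fun t ht => ?_, fun hρ t ht hent => ?_⟩
  · have hu := hu₀.differentiable one_ne_zero
    have hnhds := isOpen_Ioo.mem_nhds ht
    have ham := hasDerivAt_of_eventuallyEq_characteristic (hu _) (hdam t ht)
      (eventually_of_mem hnhds hend_m) (hpos_m t ht).ne'
    have hap := hasDerivAt_of_eventuallyEq_characteristic (hu _) (hdap t ht)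
      (eventually_of_mem hnhds hend_p) (hpos_p t ht).ne'
    refine (hρ₀.hasDerivAt_integral_comp_endpoints ham hap).congr_deriv ?_
    rw [hrh t ht, smul_eq_mul, smul_eq_mul]
    ring
  · exact mul_nonneg (by linarith)
      (add_nonneg (div_nonneg (hρ _) (hpos_m t ht).le) (div_nonneg (hρ _) (hpos_p t ht).le))

/-- Growth of the mass absorbed by a Burgers shock in the adhesion model: the absorbed
mass `M(t) = ∫_{a₋(t)}^{a₊(t)} ρ₀(a) da` is differentiable with
`M'(t) = ½(u₋ − u₊)(ρ₋ + ρ₊)`, where `ρ_± = ρ₀(a_±)/(1 + t·u₀'(a_±))`; in particular,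
if `ρ₀ ≥ 0` and the entropy condition `u₋ > u₊` holds, then `M'(t) ≥ 0`. -/
theorem shock_mass_nondecreasing (u₀ ρ₀ : ℝ → ℝ) (t₁ t₂ : ℝ) (xs am ap : ℝ → ℝ)
    (hI : Set.Ioo t₁ t₂ ⊆ Set.Ioi (0 : ℝ))
    (hu₀ : ContDiff ℝ 1 u₀) (hρ₀ : Continuous ρ₀)
    (hdx : ∀ t ∈ Set.Ioo t₁ t₂, DifferentiableAt ℝ xs t)
    (hdam : ∀ t ∈ Set.Ioo t₁ t₂, DifferentiableAt ℝ am t)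
    (hdap : ∀ t ∈ Set.Ioo t₁ t₂, DifferentiableAt ℝ ap t)
    (hlt : ∀ t ∈ Set.Ioo t₁ t₂, am t < ap t)
    (hend_m : ∀ t ∈ Set.Ioo t₁ t₂, xs t = am t + t * u₀ (am t))
    (hend_p : ∀ t ∈ Set.Ioo t₁ t₂, xs t = ap t + t * u₀ (ap t))
    (hrh : ∀ t ∈ Set.Ioo t₁ t₂, deriv xs t = (1 / 2) * (u₀ (am t) + u₀ (ap t)))
    (hpos_m : ∀ t ∈ Set.Ioo t₁ t₂, 0 < 1 + t * deriv u₀ (am t))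
    (hpos_p : ∀ t ∈ Set.Ioo t₁ t₂, 0 < 1 + t * deriv u₀ (ap t)) :
    (∀ t ∈ Set.Ioo t₁ t₂,
      HasDerivAt (fun τ => ∫ a in (am τ)..(ap τ), ρ₀ a)
        ((1 / 2) * (u₀ (am t) - u₀ (ap t))
          * (ρ₀ (am t) / (1 + t * deriv u₀ (am t))
             + ρ₀ (ap t) / (1 + t * deriv u₀ (ap t)))) t) ∧
    ((∀ a, 0 ≤ ρ₀ a) → ∀ t ∈ Set.Ioo t₁ t₂, u₀ (ap t) < u₀ (am t) →
      0 ≤ (1 / 2) * (u₀ (am t) - u₀ (ap t))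
          * (ρ₀ (am t) / (1 + t * deriv u₀ (am t))
             + ρ₀ (ap t) / (1 + t * deriv u₀ (ap t)))) :=
  shock_mass_nondecreasing_general u₀ ρ₀ t₁ t₂ xs am ap hu₀ hρ₀ hdam hdap hend_m hend_p hrh hpos_m
    hpos_p
end
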